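/- arXiv:1805.09247 — 9 statements merged into one kernel-verified Lean document; each statement's English description precedes it below -/
import Mathlib

section
/- Let K, E ≥ 2 be integers and L ∈ [0,1]^{K×E} a loss matrix with rows ℓ_a. Suppose actions a and b are neighbors (i.e., both are Pareto optimal and dim(C_a ∩ C_b) = E−2). Then for every action d with C_a ∩ C_b ⊆ C_d there exists a unique α ∈ [0,1] such that ℓ_d = α·ℓ_a + (1−α)·ℓ_b. -/
open scoped BigOperators

/-- The probability simplex in `ℝ^E`. -/
def probSimplex (E : ℕ) : Set (Fin E → ℝ) :=
  {u | (∀ i, 0 ≤ u i ∧ u i ≤ 1) ∧ ∑ i, u i = 1}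

/-- The cell of action `a`: the set of distributions on which `a` is optimal. -/
def cell {K E : ℕ} (L : Fin K → Fin E → ℝ) (a : Fin K) : Set (Fin E → ℝ) :=
  {u | u ∈ probSimplex E ∧ ∀ b, ∑ i, L a i * u i ≤ ∑ i, L b i * u i}

/-- The dimension of a set: the dimension of its affine hull. -/
noncomputable def dimSet {E : ℕ} (s : Set (Fin E → ℝ)) : ℕ :=
  Module.finrank ℝ (affineSpan ℝ s).direction

/-- Action `a` is Pareto optimal if its cell has dimension `E - 1`. -/
def ParetoOptimal {K E : ℕ} (L : Fin K → Fin E → ℝ) (a : Fin K) : Prop :=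
  (cell L a).Nonempty ∧ dimSet (cell L a) = E - 1

/-- Pareto optimal actions `a` and `b` are neighbors if `C_a ∩ C_b` has dimension `E - 2`. -/
def Neighbors {K E : ℕ} (L : Fin K → Fin E → ℝ) (a b : Fin K) : Prop :=
  ParetoOptimal L a ∧ ParetoOptimal L b ∧
    (cell L a ∩ cell L b).Nonempty ∧ dimSet (cell L a ∩ cell L b) = E - 2

/-!
The loss vectors `ℓ_a`, `ℓ_b`, `ℓ_d` take the same value at every point of `C_a ∩ C_b`. That set
lies in the affine hyperplane `∑ uᵢ = 1`, which misses the origin, so its linear span has dimension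
`E - 1`, one more than its affine hull. Thus `ℓ_b - ℓ_a` (nonzero, as `C_a ≠ C_b`)
and `ℓ_d - ℓ_a` both vanish on a hyperplane, and `ℓ_d - ℓ_a = t • (ℓ_b - ℓ_a)`. Because `C_a` and
`C_b` are larger than their intersection, each contains a point where its own action is strictly
better than the other, and optimality there of `a`, resp. `b`, against `d` forces `0 ≤ t ≤ 1`.
-/

open Module Submodule Matrix

theorem finrank_vectorSpan_lt_finrank_span {k V : Type*} [Field k] [AddCommGroup V] [Module k V]
    [FiniteDimensional k V] {s : Set V} {p : V} (hp : p ∈ s) (φ : V →ₗ[k] k)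
    (hφ : ∀ x ∈ s, φ x = 1) : finrank k (vectorSpan k s) < finrank k (span k s) := by
  have hle : vectorSpan k s ≤ span k s := by
    rw [vectorSpan_def]
    refine span_le.2 ?_
    rintro _ ⟨x, hx, y, hy, rfl⟩
    exact sub_mem (subset_span hx) (subset_span hy)
  have hker : vectorSpan k s ≤ LinearMap.ker φ := by
    rw [vectorSpan_def]
    refine span_le.2 ?_
    rintro _ ⟨x, hx, y, hy, rfl⟩
    simp [hφ x hx, hφ y hy]
  refine finrank_lt_finrank_of_lt (lt_of_le_of_ne hle fun h => ?_)
  have hpv : p ∈ vectorSpan k s := h ▸ subset_span hp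
  simpa [hφ p hp] using hker hpv

theorem Module.Dual.exists_eq_smul_of_subset_ker {k V : Type*} [Field k] [AddCommGroup V]
    [Module k V] [FiniteDimensional k V] {s : Set V} {f g : Dual k V} (hf : f ≠ 0)
    (hs : finrank k V ≤ finrank k (span k s) + 1) (hsf : s ⊆ LinearMap.ker f)
    (hsg : s ⊆ LinearMap.ker g) : ∃ c : k, g = c • f := by
  have hker : span k s = LinearMap.ker f :=
    eq_of_le_of_finrank_le (span_le.2 hsf) (by have := f.finrank_ker_add_one_of_ne_zero hf; omega)
  have hg : g ∈ span k (Set.range fun _ : Unit => f) :=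
    mem_span_of_iInf_ker_le_ker (by simpa [← hker] using span_le.2 hsg)
  obtain ⟨c, hc⟩ := mem_span_singleton.1 (by simpa using hg)
  exact ⟨c, hc.symm⟩

theorem exists_eq_smul_of_dotProduct_eq_zero {k ι : Type*} [Field k] [Fintype ι]
    {s : Set (ι → k)} (hs : Fintype.card ι ≤ finrank k (span k s) + 1) {w w' : ι → k}
    (hw : w ≠ 0) (h : ∀ u ∈ s, w ⬝ᵥ u = 0) (h' : ∀ u ∈ s, w' ⬝ᵥ u = 0) :
    ∃ c : k, w' = c • w := by
  classical
  obtain ⟨c, hc⟩ := Dual.exists_eq_smul_of_subset_ker (g := dotProductEquiv k ι w')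
    ((dotProductEquiv k ι).map_ne_zero_iff.2 hw) (by simpa using hs)
    (fun u hu => by simpa using h u hu) (fun u hu => by simpa using h' u hu)
  exact ⟨c, (dotProductEquiv k ι).injective (by rw [map_smul]; exact hc)⟩

section Cells

variable {K E : ℕ} {L : Fin K → Fin E → ℝ} {a b d : Fin K}

theorem dotProduct_le_of_mem_cell {u : Fin E → ℝ} (hu : u ∈ cell L a) (b : Fin K) :
    L a ⬝ᵥ u ≤ L b ⬝ᵥ u :=
  hu.2 b

theorem dotProduct_eq_of_mem_cell {u : Fin E → ℝ} (ha : u ∈ cell L a) (hb : u ∈ cell L b) :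
    L a ⬝ᵥ u = L b ⬝ᵥ u :=
  le_antisymm (dotProduct_le_of_mem_cell ha b) (dotProduct_le_of_mem_cell hb a)

theorem Neighbors.symm (h : Neighbors L a b) : Neighbors L b a := by
  obtain ⟨ha, hb, hne, hdim⟩ := h
  rw [Set.inter_comm] at hne hdim
  exact ⟨hb, ha, hne, hdim⟩

theorem Neighbors.exists_dotProduct_lt (hE : 2 ≤ E) (h : Neighbors L a b) :
    ∃ u ∈ cell L a, L a ⬝ᵥ u < L b ⬝ᵥ u := by
  by_contra! hle
  have hinter : cell L a ∩ cell L b = cell L a :=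
    Set.inter_eq_left.2 fun u hu =>
      ⟨hu.1, fun c => (hle u hu).trans (dotProduct_le_of_mem_cell hu c)⟩
  have hdim := h.2.2.2
  rw [hinter, h.1.2] at hdim
  omega

theorem Neighbors.le_finrank_span (h : Neighbors L a b) :
    E ≤ finrank ℝ (span ℝ (cell L a ∩ cell L b)) + 1 := by
  obtain ⟨u, hu⟩ := h.2.2.1
  have hlt := finrank_vectorSpan_lt_finrank_span hu (dotProductEquiv ℝ (Fin E) 1)
    fun x hx => by simpa [one_dotProduct] using hx.1.1.2
  have hdim := h.2.2.2
  rw [dimSet, direction_affineSpan] at hdim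
  omega

theorem Neighbors.exists_sub_eq_smul_sub (hE : 2 ≤ E) (h : Neighbors L a b)
    (hd : cell L a ∩ cell L b ⊆ cell L d) : ∃ t : ℝ, L d - L a = t • (L b - L a) := by
  obtain ⟨u, -, hu⟩ := h.exists_dotProduct_lt hE
  refine exists_eq_smul_of_dotProduct_eq_zero (by simpa using h.le_finrank_span) ?_ ?_ ?_
  · rw [Ne, sub_eq_zero]
    rintro hba
    exact hu.ne (congrArg (· ⬝ᵥ u) hba.symm)
  · intro v hv
    rw [sub_dotProduct, dotProduct_eq_of_mem_cell hv.2 hv.1, sub_self]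
  · intro v hv
    rw [sub_dotProduct, dotProduct_eq_of_mem_cell (hd hv) hv.1, sub_self]

end Cells

theorem stmt0_general {K E : ℕ} (hE : 2 ≤ E)
    (L : Fin K → Fin E → ℝ)
    (a b : Fin K) (hab : Neighbors L a b)
    (d : Fin K) (hd : cell L a ∩ cell L b ⊆ cell L d) :
    ∃! α : ℝ, α ∈ Set.Icc (0 : ℝ) 1 ∧ ∀ i, L d i = α * L a i + (1 - α) * L b i := by
  obtain ⟨t, ht⟩ := hab.exists_sub_eq_smul_sub hE hd
  have hform : L d = (1 - t) • L a + t • L b := by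
    rw [← sub_add_cancel (L d) (L a), ht]
    module
  have hform_apply (i : Fin E) : L d i = (1 - t) * L a i + (1 - (1 - t)) * L b i := by
    simp [hform]
  have hdot (u : Fin E → ℝ) : L d ⬝ᵥ u = (1 - t) * (L a ⬝ᵥ u) + t * (L b ⬝ᵥ u) := by
    rw [hform, add_dotProduct, smul_dotProduct, smul_dotProduct, smul_eq_mul, smul_eq_mul]
  obtain ⟨u, hu, hua⟩ := hab.exists_dotProduct_lt hE
  obtain ⟨v, hv, hvb⟩ := hab.symm.exists_dotProduct_lt hE
  have hua' := hdot u ▸ dotProduct_le_of_mem_cell hu d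
  have hvb' := hdot v ▸ dotProduct_le_of_mem_cell hv d
  refine ⟨1 - t, ⟨⟨by nlinarith, by nlinarith⟩, hform_apply⟩, ?_⟩
  rintro β ⟨-, hβ⟩
  obtain ⟨i, hi⟩ : ∃ i, L a i ≠ L b i := Function.ne_iff.1 fun hab' => hua.ne (hab' ▸ rfl)
  have hzero : (β - (1 - t)) * (L a i - L b i) = 0 := by
    linear_combination hform_apply i - hβ i
  exact sub_eq_zero.1 ((mul_eq_zero.1 hzero).resolve_right (sub_ne_zero.2 hi))

theorem stmt0 {K E : ℕ} (hK : 2 ≤ K) (hE : 2 ≤ E)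
    (L : Fin K → Fin E → ℝ) (hL : ∀ a i, L a i ∈ Set.Icc (0 : ℝ) 1)
    (a b : Fin K) (hab : Neighbors L a b)
    (d : Fin K) (hd : cell L a ∩ cell L b ⊆ cell L d) :
    ∃! α : ℝ, α ∈ Set.Icc (0 : ℝ) 1 ∧ ∀ i, L d i = α * L a i + (1 - α) * L b i :=
  stmt0_general hE L a b hab d hd
end

section
/- Let K, E ≥ 2 be integers and L ∈ [0,1]^{K×E} a loss matrix with rows ℓ_a. Suppose actions a and b are neighbors and d is an action with C_a ∩ C_b ⊆ C_d such that ℓ_d = α·ℓ_a + (1−α)·ℓ_b for some α ∈ (0,1) (strictly between 0 and 1). Then C_d = C_a ∩ C_b. -/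
open scoped BigOperators

/-! Where `d` is optimal its expected loss, a strict convex combination of those of `a` and `b`,
is at most both of them, so all three coincide and `a`, `b` are optimal as well. -/

theorem eq_and_eq_of_le_of_eq_convexComb {x y z α : ℝ} (hα : α ∈ Set.Ioo (0 : ℝ) 1)
    (hy : x ≤ y) (hz : x ≤ z) (h : x = α * y + (1 - α) * z) : y = x ∧ z = x := by
  obtain ⟨hα0, hα1⟩ := hα
  constructor <;> nlinarith

theorem sum_mul_eq_convexComb {K E : ℕ} {L : Fin K → Fin E → ℝ} {a b d : Fin K} {α : ℝ}
    (hld : ∀ i, L d i = α * L a i + (1 - α) * L b i) (u : Fin E → ℝ) :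
    ∑ i, L d i * u i = α * ∑ i, L a i * u i + (1 - α) * ∑ i, L b i * u i := by
  simp only [hld, add_mul, mul_assoc, Finset.sum_add_distrib, Finset.mul_sum]

theorem cell_subset_inter_of_convexComb {K E : ℕ} {L : Fin K → Fin E → ℝ} {a b d : Fin K}
    {α : ℝ} (hα : α ∈ Set.Ioo (0 : ℝ) 1) (hld : ∀ i, L d i = α * L a i + (1 - α) * L b i) :
    cell L d ⊆ cell L a ∩ cell L b := by
  rintro u ⟨hu, hdopt⟩
  obtain ⟨hda, hdb⟩ :=
    eq_and_eq_of_le_of_eq_convexComb hα (hdopt a) (hdopt b) (sum_mul_eq_convexComb hld u)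
  exact ⟨⟨hu, fun c => hda ▸ hdopt c⟩, ⟨hu, fun c => hdb ▸ hdopt c⟩⟩

theorem stmt1_general {K E : ℕ}
    (L : Fin K → Fin E → ℝ)
    (a b : Fin K)
    (d : Fin K) (hd : cell L a ∩ cell L b ⊆ cell L d)
    (α : ℝ) (hα : α ∈ Set.Ioo (0 : ℝ) 1)
    (hld : ∀ i, L d i = α * L a i + (1 - α) * L b i) :
    cell L d = cell L a ∩ cell L b :=
  (cell_subset_inter_of_convexComb hα hld).antisymm hd

theorem stmt1 {K E : ℕ} (hK : 2 ≤ K) (hE : 2 ≤ E)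
    (L : Fin K → Fin E → ℝ) (hL : ∀ a i, L a i ∈ Set.Icc (0 : ℝ) 1)
    (a b : Fin K) (hab : Neighbors L a b)
    (d : Fin K) (hd : cell L a ∩ cell L b ⊆ cell L d)
    (α : ℝ) (hα : α ∈ Set.Ioo (0 : ℝ) 1)
    (hld : ∀ i, L d i = α * L a i + (1 - α) * L b i) :
    cell L d = cell L a ∩ cell L b :=
  stmt1_general L a b d hd α hα hld
end

section
/- Let K, E ≥ 2 be integers and L ∈ [0,1]^{K×E} a loss matrix with rows ℓ_a, and let 𝒜 be a maximal subset of Pareto optimal actions containing no two duplicate actions. Then there exists a constant ε > 0, depending only on L, such that for all pairs of actions a, ã ∈ 𝒜 and all u ∈ C_{ã}, there exists an action b ∈ N_a ∩ 𝒜 with ⟨ℓ_a − ℓ_{ã}, u⟩ ≤ ⟨ℓ_a − ℓ_b, u⟩ / ε. -/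
open scoped BigOperators

/-- `b` belongs to the neighborhood `N_a`: either `b = a`, or `b` is a neighbor of `a`
that is not a duplicate of `a`. -/
def InNbhd {K E : ℕ} (L : Fin K → Fin E → ℝ) (a b : Fin K) : Prop :=
  b = a ∨ (Neighbors L a b ∧ L b ≠ L a)

/-!
Fix a Pareto optimal `a` and a point `x` of its cell with positive coordinates and a margin
`c₀ > 0` against every action that is not a duplicate of `a`; the margin is uniform, while `x`
may still be moved to a generic position depending on `u`. Walk from `x` towards a point `u`
outside the cell. Genericity forces every constraint active at the exit point `w` to be a
positive multiple of a single one, and the action `b` with the largest multiple is optimal on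
the far side of that facet near `w`: its cell is full dimensional and meets the cell of `a` in
codimension one, so `b` is a neighbour of `a`. Comparing the excess losses at `x`, `w` and `u`
gives `⟨ℓ_a - ℓ_c, u⟩ ≤ ⟨ℓ_a - ℓ_b, u⟩ / c₀` for every action `c`. Finally `b` is exchanged
for its representative in `𝒜`, and the finitely many constants for `a ∈ 𝒜` are combined.
-/

open Module Filter Topology

noncomputable def excess {K E : ℕ} (L : Fin K → Fin E → ℝ) (a c : Fin K) :
    (Fin E → ℝ) →ₗ[ℝ] ℝ :=
  dotProductBilin ℝ ℝ (L c - L a)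

noncomputable def sumZero (E : ℕ) : Submodule ℝ (Fin E → ℝ) :=
  LinearMap.ker (dotProductBilin ℝ ℝ (1 : Fin E → ℝ))

section General

variable {F : Type*} [AddCommGroup F] [Module ℝ F]

lemma vectorSpan_le_ker_of_forall_eq {s : Set F} {χ : F →ₗ[ℝ] ℝ} {r : ℝ}
    (h : ∀ z ∈ s, χ z = r) : vectorSpan ℝ s ≤ LinearMap.ker χ := by
  rw [vectorSpan_def, Submodule.span_le]
  rintro _ ⟨x, hx, y, hy, rfl⟩
  simp [h x hx, h y hy]

lemma le_vectorSpan_of_forall_exists_add_smul_mem {s : Set F} {w : F} (hw : w ∈ s)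
    {W : Submodule ℝ F} (h : ∀ v ∈ W, ∃ t ≠ (0 : ℝ), w + t • v ∈ s) :
    W ≤ vectorSpan ℝ s := by
  intro v hv
  obtain ⟨t, ht, hts⟩ := h v hv
  have htv : t • v ∈ vectorSpan ℝ s := by simpa using vsub_mem_vectorSpan ℝ hts hw
  simpa [smul_smul, ht] using Submodule.smul_mem _ t⁻¹ htv

lemma Submodule.finrank_inf_ker_add_one [FiniteDimensional ℝ F] (W : Submodule ℝ F)
    {ψ : F →ₗ[ℝ] ℝ} {v : F} (hv : v ∈ W) (hψv : ψ v ≠ 0) :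
    finrank ℝ ↥(W ⊓ LinearMap.ker ψ) + 1 = finrank ℝ W := by
  have hψ : ψ.domRestrict W ≠ 0 := fun h => hψv (by simpa using LinearMap.congr_fun h ⟨v, hv⟩)
  rw [← Module.Dual.finrank_ker_add_one_of_ne_zero hψ, LinearMap.ker_domRestrict,
    ← Submodule.finrank_map_subtype_eq, Submodule.map_comap_subtype]

lemma Convex.exists_forall_pos {s : Set F} (hs : Convex ℝ s) (hne : s.Nonempty)
    (T : Finset (F →ₗ[ℝ] ℝ)) (hT : ∀ f ∈ T, (∀ x ∈ s, 0 ≤ f x) ∧ ∃ x ∈ s, 0 < f x) :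
    ∃ x ∈ s, ∀ f ∈ T, 0 < f x := by
  classical
  induction T using Finset.induction_on with
  | empty => simpa [Set.Nonempty] using hne
  | insert f T _ ih =>
    obtain ⟨x, hx, hxT⟩ := ih fun g hg => hT g (Finset.mem_insert_of_mem hg)
    obtain ⟨hf, y, hy, hfy⟩ := hT f (Finset.mem_insert_self f T)
    refine ⟨(1 / 2 : ℝ) • x + (1 / 2 : ℝ) • y, hs hx hy (by norm_num) (by norm_num) (by norm_num),
      fun g hg => ?_⟩
    rcases Finset.mem_insert.1 hg with rfl | hg
    · simp only [map_add, map_smul, smul_eq_mul]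
      linarith [hf x hx]
    · simp only [map_add, map_smul, smul_eq_mul]
      linarith [hxT g hg, (hT g (Finset.mem_insert_of_mem hg)).1 y hy]

lemma exists_exit_time {ι : Type*} [Fintype ι] (p q : ι → ℝ) (hp : ∀ c, 0 ≤ p c)
    (hq : ∃ c, q c < 0) :
    ∃ t ∈ Set.Ico (0 : ℝ) 1, ∃ b, q b < 0 ∧ (1 - t) * p b + t * q b = 0 ∧
      ∀ c, 0 ≤ (1 - t) * p c + t * q c := by
  classical
  -- the first time at which the segment from `p` to `q` leaves the nonnegative orthant
  obtain ⟨b, hb, hmin⟩ := (Finset.univ.filter fun c => q c < 0).exists_min_image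
    (fun c => p c / (p c - q c)) (by simpa [Finset.Nonempty] using hq)
  simp only [Finset.mem_filter, Finset.mem_univ, true_and] at hb hmin
  have hbd : 0 < p b - q b := by linarith [hp b]
  have ht0 : 0 ≤ p b / (p b - q b) := div_nonneg (hp b) hbd.le
  have ht1 : p b / (p b - q b) < 1 := (div_lt_one hbd).2 (by linarith)
  refine ⟨p b / (p b - q b), ⟨ht0, ht1⟩, b, hb, by field_simp; ring, fun c => ?_⟩
  by_cases hc : q c < 0
  · have hcd : 0 < p c - q c := by linarith [hp c]
    have := (le_div_iff₀ hcd).1 (hmin c hc)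
    linarith
  · push Not at hc
    nlinarith [hp c]

lemma eq_smul_of_map_segment_eq_zero {f g : F →ₗ[ℝ] ℝ} {x u : F} {t : ℝ} (ht : t < 1)
    (hfu : f u ≠ 0)
    (hx : g u • f - f u • g ≠ 0 → (g u • f - f u • g) x ≠ 0)
    (hf : f ((1 - t) • x + t • u) = 0) (hg : g ((1 - t) • x + t • u) = 0) :
    g = (g u / f u) • f := by
  have hψ : g u • f - f u • g = 0 := by
    by_contra hne
    -- it vanishes at `u` and at a point of `[x, u)`, hence at `x`
    apply hx hne
    have hw : (g u • f - f u • g) ((1 - t) • x + t • u) = 0 := by simp [hf, hg]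
    simp only [map_add, map_smul, LinearMap.sub_apply, LinearMap.smul_apply, smul_eq_mul] at hw ⊢
    have h1t : (1 - t) ≠ 0 := by linarith
    have : (1 - t) * (g u * f x - f u * g x) = 0 := by linarith [hw]
    simpa [h1t] using this
  ext z
  have := LinearMap.congr_fun hψ z
  simp only [LinearMap.sub_apply, LinearMap.smul_apply, smul_eq_mul, LinearMap.zero_apply] at this ⊢
  field_simp
  linarith

lemma exists_crossing {ι : Type*} [Fintype ι] (f : ι → F →ₗ[ℝ] ℝ) {x u : F}
    (hx : ∀ c, 0 ≤ f c x)
    (hgen : ∀ b c, f c u • f b - f b u • f c ≠ 0 → (f c u • f b - f b u • f c) x ≠ 0)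
    (hu : ∃ c, f c u < 0) :
    ∃ t ∈ Set.Ico (0 : ℝ) 1, ∃ b, f b u < 0 ∧ f b ((1 - t) • x + t • u) = 0 ∧
      (∀ c, 0 ≤ f c ((1 - t) • x + t • u)) ∧
      ∀ c, f c ((1 - t) • x + t • u) = 0 → f c = (f c u / f b u) • f b := by
  obtain ⟨t, ht, b, hbu, hbw, hw⟩ := exists_exit_time (fun c => f c x) (fun c => f c u) hx hu
  have hfw : ∀ c, f c ((1 - t) • x + t • u) = (1 - t) * f c x + t * f c u := fun c => by simp
  refine ⟨t, ht, b, hbu, (hfw b).trans hbw, fun c => (hfw c).symm ▸ hw c, fun c hc => ?_⟩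
  exact eq_smul_of_map_segment_eq_zero ht.2 hbu.ne (hgen b c) ((hfw b).trans hbw) hc

end General

lemma exists_max_smul {ι M : Type*} [AddCommGroup M] [Module ℝ M] (S : Finset ι) (f : ι → M)
    (v : M) (r : ι → ℝ) (hf : ∀ c ∈ S, f c = r c • v) (hr : ∀ c ∈ S, 0 ≤ r c) {i₀ : ι}
    (hi₀ : i₀ ∈ S) (hri₀ : 0 < r i₀) :
    ∃ j ∈ S, 0 < r j ∧ ∀ c ∈ S, ∃ l ∈ Set.Icc (0 : ℝ) 1, f c = l • f j := by
  obtain ⟨j, hj, hmax⟩ := S.exists_max_image r ⟨i₀, hi₀⟩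
  have hrj : 0 < r j := hri₀.trans_le (hmax i₀ hi₀)
  refine ⟨j, hj, hrj, fun c hc => ⟨r c / r j,
    ⟨div_nonneg (hr c hc) hrj.le, (div_le_one hrj).2 (hmax c hc)⟩, ?_⟩⟩
  rw [hf c hc, hf j hj, smul_smul, div_mul_cancel₀ _ hrj.ne']

lemma neg_le_div_of_crossing {t p q p' q' c₀ : ℝ} (ht : 0 < t) (ht1 : t ≤ 1) (hc₀ : 0 < c₀)
    (hp : p ≤ 1) (hpq : 0 ≤ (1 - t) * p + t * q) (hp' : c₀ ≤ p')
    (hpq' : (1 - t) * p' + t * q' = 0) : -q ≤ -q' / c₀ := by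
  rw [le_div_iff₀ hc₀]
  have h1 : t * -q ≤ 1 - t := by nlinarith
  have h2 : (1 - t) * c₀ ≤ t * -q' := by nlinarith
  nlinarith

lemma dense_setOf_forall_ne_zero {F : Type*} [NormedAddCommGroup F] [NormedSpace ℝ F]
    [FiniteDimensional ℝ F] (T : Finset (F →ₗ[ℝ] ℝ)) (hT : (0 : F →ₗ[ℝ] ℝ) ∉ T) :
    Dense {y | ∀ ψ ∈ T, ψ y ≠ 0} := by
  have hset : {y | ∀ ψ ∈ T, ψ y ≠ 0} = ⋂ ψ ∈ (T : Set (F →ₗ[ℝ] ℝ)), (LinearMap.ker ψ : Set F)ᶜ := by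
    ext; simp
  rw [hset]
  refine dense_biInter_of_isOpen
    (fun ψ _ => (LinearMap.ker ψ).closed_of_finiteDimensional.isOpen_compl)
    T.countable_toSet fun ψ hψ => ?_
  rw [← interior_eq_empty_iff_dense_compl, ← Set.not_nonempty_iff_eq_empty]
  intro hint
  have : ψ = 0 := LinearMap.ker_eq_top.1 ((LinearMap.ker ψ).eq_top_of_nonempty_interior' hint)
  exact hT (this ▸ hψ)

lemma exists_ne_zero_add_smul_mem {F : Type*} [AddCommGroup F] [TopologicalSpace F] [Module ℝ F]
    [ContinuousAdd F] [ContinuousSMul ℝ F] {N : Set F} {w : F} (hN : N ∈ 𝓝 w) (v : F) (r : ℝ) :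
    ∃ t ≠ (0 : ℝ), w + t • v ∈ N ∧ t * r ≤ 0 := by
  have hline : ∀ᶠ t in 𝓝 (0 : ℝ), w + t • v ∈ N := by
    have : Tendsto (fun t : ℝ => w + t • v) (𝓝 0) (𝓝 w) := by
      simpa using tendsto_const_nhds.add ((tendsto_id (x := 𝓝 (0 : ℝ))).smul_const v)
    exact this hN
  rcases le_or_gt r 0 with hr | hr
  · obtain ⟨t, ht, htpos⟩ := ((hline.filter_mono nhdsWithin_le_nhds).and
      (self_mem_nhdsWithin : Set.Ioi (0 : ℝ) ∈ 𝓝[>] 0)).exists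
    exact ⟨t, htpos.ne', ht, mul_nonpos_of_nonneg_of_nonpos htpos.le hr⟩
  · obtain ⟨t, ht, htneg⟩ := ((hline.filter_mono nhdsWithin_le_nhds).and
      (self_mem_nhdsWithin : Set.Iio (0 : ℝ) ∈ 𝓝[<] 0)).exists
    exact ⟨t, htneg.ne, ht, mul_nonpos_of_nonpos_of_nonneg htneg.le hr.le⟩

section Cells

variable {K E : ℕ} (L : Fin K → Fin E → ℝ)

lemma excess_apply (a c : Fin K) (z : Fin E → ℝ) :
    excess L a c z = ∑ i, L c i * z i - ∑ i, L a i * z i := by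
  simp [excess, dotProduct]

lemma excess_eq_zero_of_eq {a c : Fin K} (h : L c = L a) : excess L a c = 0 := by
  ext z; simp [excess_apply, h]

lemma mem_sumZero {v : Fin E → ℝ} : v ∈ sumZero E ↔ ∑ i, v i = 0 := by
  simp [sumZero, one_dotProduct]

lemma sub_mem_sumZero {x y : Fin E → ℝ} (hx : ∑ i, x i = 1) (hy : ∑ i, y i = 1) :
    x - y ∈ sumZero E := by
  simp [mem_sumZero, Finset.sum_sub_distrib, hx, hy]

lemma finrank_sumZero_add_one (hE : 0 < E) : finrank ℝ (sumZero E) + 1 = E := by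
  have h : dotProductBilin ℝ ℝ (1 : Fin E → ℝ) ≠ 0 := fun h => by
    simpa using LinearMap.congr_fun h (Pi.single ⟨0, hE⟩ 1)
  exact (Module.Dual.finrank_ker_add_one_of_ne_zero h).trans (Module.finrank_fin_fun ℝ)

lemma probSimplex_eq_stdSimplex : probSimplex E = stdSimplex ℝ (Fin E) := by
  ext u
  refine ⟨fun ⟨h, hsum⟩ => ⟨fun i => (h i).1, hsum⟩, fun ⟨h, hsum⟩ => ⟨fun i => ⟨h i, ?_⟩, hsum⟩⟩
  exact hsum ▸ Finset.single_le_sum (fun j _ => h j) (Finset.mem_univ i)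

lemma pos_of_mem_probSimplex {u : Fin E → ℝ} (hu : u ∈ probSimplex E) : 0 < E := by
  rcases Nat.eq_zero_or_pos E with rfl | hE
  · simpa using hu.2
  · exact hE

lemma mem_cell_iff_excess_nonneg (a : Fin K) {z : Fin E → ℝ} :
    z ∈ cell L a ↔ z ∈ probSimplex E ∧ ∀ c, 0 ≤ excess L a c z := by
  simp [cell, excess_apply]

lemma mem_cell_iff_excess_le (a b : Fin K) {z : Fin E → ℝ} :
    z ∈ cell L b ↔ z ∈ probSimplex E ∧ ∀ c, excess L a b z ≤ excess L a c z := by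
  simp [cell, excess_apply]

lemma vectorSpan_cell_le_sumZero (b : Fin K) : vectorSpan ℝ (cell L b) ≤ sumZero E :=
  vectorSpan_le_ker_of_forall_eq fun x hx => (one_dotProduct x).trans hx.1.2

lemma cell_congr {b b' : Fin K} (h : L b' = L b) : cell L b' = cell L b := by
  unfold cell; rw [h]

lemma convex_cell (a : Fin K) : Convex ℝ (cell L a) := by
  have : cell L a = stdSimplex ℝ (Fin E) ∩ ⋂ c, {z | 0 ≤ excess L a c z} := by
    ext z; simp [mem_cell_iff_excess_nonneg, probSimplex_eq_stdSimplex]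
  rw [this]
  exact (convex_stdSimplex ℝ _).inter
    (convex_iInter fun c => convex_halfSpace_ge (excess L a c).isLinear 0)

lemma excess_le_one (hL : ∀ a i, L a i ∈ Set.Icc (0 : ℝ) 1) (a c : Fin K) {x : Fin E → ℝ}
    (hx : x ∈ probSimplex E) : excess L a c x ≤ 1 := by
  have hc : ∑ i, L c i * x i ≤ 1 := hx.2 ▸ Finset.sum_le_sum fun i _ =>
    mul_le_of_le_one_left (hx.1 i).1 (hL c i).2
  have ha : 0 ≤ ∑ i, L a i * x i := Finset.sum_nonneg fun i _ => mul_nonneg (hL a i).1 (hx.1 i).1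
  rw [excess_apply]
  linarith

end Cells

namespace ParetoOptimal

variable {K E : ℕ} {L : Fin K → Fin E → ℝ} {a : Fin K}

lemma pos (hP : ParetoOptimal L a) : 0 < E :=
  pos_of_mem_probSimplex hP.1.some_mem.1

lemma vectorSpan_cell (hP : ParetoOptimal L a) : vectorSpan ℝ (cell L a) = sumZero E := by
  refine Submodule.eq_of_le_of_finrank_eq (vectorSpan_cell_le_sumZero L a) ?_
  have hdim := hP.2
  rw [dimSet, direction_affineSpan] at hdim
  have := finrank_sumZero_add_one hP.pos
  omega

lemma map_eq_zero (hP : ParetoOptimal L a) {χ : (Fin E → ℝ) →ₗ[ℝ] ℝ}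
    (h : ∀ z ∈ cell L a, χ z = 0) {x : Fin E → ℝ} (hx : ∑ i, x i = 1) : χ x = 0 := by
  obtain ⟨z, hz⟩ := hP.1
  have hxz : χ (x - z) = 0 :=
    vectorSpan_le_ker_of_forall_eq h (hP.vectorSpan_cell ▸ sub_mem_sumZero hx hz.1.2)
  simpa [h z hz] using hxz

lemma exists_pos (hP : ParetoOptimal L a) {χ : (Fin E → ℝ) →ₗ[ℝ] ℝ}
    (hχ : ∀ z ∈ cell L a, 0 ≤ χ z) {x : Fin E → ℝ} (hx : ∑ i, x i = 1) (hχx : χ x ≠ 0) :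
    ∃ z ∈ cell L a, 0 < χ z := by
  by_contra! h
  exact hχx (hP.map_eq_zero (fun z hz => le_antisymm (h z hz) (hχ z hz)) hx)

lemma exists_mem_cell_forall_pos (hP : ParetoOptimal L a) :
    ∃ x ∈ cell L a, (∀ i, 0 < x i) ∧ ∀ c, L c ≠ L a → 0 < excess L a c x := by
  classical
  have hcoord (i : Fin E) : (∀ z ∈ cell L a, 0 ≤ z i) ∧ ∃ z ∈ cell L a, 0 < z i :=
    ⟨fun z hz => (hz.1.1 i).1, hP.exists_pos (χ := LinearMap.proj i) (fun z hz => (hz.1.1 i).1)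
      (x := Pi.single i 1) (by simp) (by simp)⟩
  have hexcess (c : Fin K) (hc : L c ≠ L a) :
      (∀ z ∈ cell L a, 0 ≤ excess L a c z) ∧ ∃ z ∈ cell L a, 0 < excess L a c z := by
    have hnonneg : ∀ z ∈ cell L a, 0 ≤ excess L a c z :=
      fun z hz => ((mem_cell_iff_excess_nonneg L a).1 hz).2 c
    obtain ⟨i, hi⟩ := Function.ne_iff.1 hc
    exact ⟨hnonneg, hP.exists_pos hnonneg (x := Pi.single i 1) (by simp)
      (by simpa [excess_apply, sub_eq_zero, Pi.single_apply] using hi)⟩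
  set T := Finset.univ.image LinearMap.proj ∪ (Finset.univ.filter (L · ≠ L a)).image (excess L a)
  have hmem : ∀ f, f ∈ T ↔ (∃ i, LinearMap.proj i = f) ∨ ∃ c, L c ≠ L a ∧ excess L a c = f := by
    simp [T]
  obtain ⟨x, hx, hpos⟩ := (convex_cell L a).exists_forall_pos hP.1 T fun f hf => by
    rcases (hmem f).1 hf with ⟨i, rfl⟩ | ⟨c, hc, rfl⟩
    exacts [hcoord i, hexcess c hc]
  exact ⟨x, hx, fun i => hpos _ ((hmem _).2 (Or.inl ⟨i, rfl⟩)),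
    fun c hc => hpos _ ((hmem _).2 (Or.inr ⟨c, hc, rfl⟩))⟩

lemma exists_margin (hP : ParetoOptimal L a) :
    ∃ c₀ > (0 : ℝ), ∀ T : Finset ((Fin E → ℝ) →ₗ[ℝ] ℝ), 0 ∉ T →
      ∃ x ∈ cell L a, (∀ i, 0 < x i) ∧ (∀ c, L c ≠ L a → c₀ ≤ excess L a c x) ∧
        ∀ ψ ∈ T, ψ x ≠ 0 := by
  obtain ⟨xb, hxb, hxbpos, hxbc⟩ := hP.exists_mem_cell_forall_pos
  obtain ⟨c₀, hc₀lt, hc₀⟩ : ∃ c₀, (∀ c, L c ≠ L a → c₀ < excess L a c xb) ∧ 0 < c₀ := by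
    refine ((eventually_all.2 fun c => ?_).and self_mem_nhdsWithin).exists (f := 𝓝[>] (0 : ℝ))
    by_cases hc : L c = L a
    · exact Eventually.of_forall fun _ h => absurd hc h
    · exact ((eventually_lt_nhds (hxbc c hc)).filter_mono nhdsWithin_le_nhds).mono
        fun _ h _ => h
  refine ⟨c₀, hc₀, fun T hT => ?_⟩
  -- a cone around `xb`, so that normalising a generic point keeps it inside
  have hcone : ∀ᶠ y in 𝓝 xb, 0 < ∑ i, y i ∧ (∀ i, 0 < y i) ∧
      ∀ c, L c ≠ L a → c₀ * ∑ i, y i < excess L a c y := by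
    have hsum : Tendsto (fun y : Fin E → ℝ => ∑ i, y i) (𝓝 xb) (𝓝 1) :=
      hxb.1.2 ▸ (continuous_finsetSum _ fun i _ => continuous_apply i).tendsto xb
    refine (hsum.eventually_const_lt one_pos).and ((eventually_all.2 fun i =>
      ((continuous_apply i).tendsto xb).eventually_const_lt (hxbpos i)).and
      (eventually_all.2 fun c => ?_))
    by_cases hc : L c = L a
    · exact Eventually.of_forall fun _ h => absurd hc h
    · have hlin : Tendsto (excess L a c) (𝓝 xb) (𝓝 (excess L a c xb)) :=
        (LinearMap.continuous_of_finiteDimensional _).tendsto xb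
      exact ((hsum.const_mul c₀).eventually_lt hlin (by simpa using hc₀lt c hc)).mono
        fun _ h _ => h
  obtain ⟨y, hyT, hsum, hypos, hyc⟩ := (dense_setOf_forall_ne_zero T hT).inter_nhds_nonempty hcone
  set s := ∑ i, y i
  have hx1 : ∑ i, (s⁻¹ • y) i = 1 := by
    simp [← Finset.mul_sum, s, inv_mul_cancel₀ hsum.ne']
  have hxpos : ∀ i, 0 < (s⁻¹ • y) i := fun i => by simpa using mul_pos (inv_pos.2 hsum) (hypos i)
  have hxc : ∀ c, L c ≠ L a → c₀ ≤ excess L a c (s⁻¹ • y) := fun c hc => by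
    rw [map_smul, smul_eq_mul, le_inv_mul_iff₀ hsum, mul_comm]
    exact (hyc c hc).le
  refine ⟨s⁻¹ • y, (mem_cell_iff_excess_nonneg L a).2 ⟨?_, fun c => ?_⟩, hxpos, hxc, fun ψ hψ => ?_⟩
  · rw [probSimplex_eq_stdSimplex]
    exact ⟨fun i => (hxpos i).le, hx1⟩
  · by_cases hc : L c = L a
    · simp [excess_eq_zero_of_eq L hc]
    · exact hc₀.le.trans (hxc c hc)
  · simpa [hsum.ne'] using hyT ψ hψ

end ParetoOptimal

section Facet

variable {K E : ℕ} {L : Fin K → Fin E → ℝ} {a b : Fin K} {w : Fin E → ℝ}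

lemma excess_eq_zero_of_mem_inter {z : Fin E → ℝ} (hz : z ∈ cell L a ∩ cell L b) :
    excess L a b z = 0 := by
  have hab := ((mem_cell_iff_excess_le L a b).1 hz.2).2 a
  rw [excess_eq_zero_of_eq L rfl] at hab
  exact le_antisymm hab (((mem_cell_iff_excess_nonneg L a).1 hz.1).2 b)

lemma eventually_mem_cell (hwpos : ∀ i, 0 < w i) (hwa : ∀ c, 0 ≤ excess L a c w)
    (hact : ∀ c, excess L a c w = 0 → ∃ l ∈ Set.Icc (0 : ℝ) 1, excess L a c = l • excess L a b) :
    ∀ᶠ z in 𝓝 w, ∑ i, z i = 1 → excess L a b z ≤ 0 →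
      z ∈ cell L b ∧ (excess L a b z = 0 → z ∈ cell L a) := by
  have hinactive : ∀ᶠ z in 𝓝 w, ∀ c, 0 < excess L a c w → 0 < excess L a c z :=
    eventually_all.2 fun c => by
      by_cases hc : 0 < excess L a c w
      · exact (((LinearMap.continuous_of_finiteDimensional _).tendsto w).eventually_const_lt
          hc).mono fun _ h _ => h
      · exact Eventually.of_forall fun _ h => absurd h hc
  filter_upwards [eventually_all.2 fun i =>
    ((continuous_apply i).tendsto w).eventually_const_lt (hwpos i), hinactive]
    with z hzpos hzc hz1 hbz
  have hz : z ∈ probSimplex E := by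
    rw [probSimplex_eq_stdSimplex]
    exact ⟨fun i => (hzpos i).le, hz1⟩
  have hle : ∀ c, excess L a b z ≤ excess L a c z := fun c => by
    rcases (hwa c).lt_or_eq with hc | hc
    · linarith [hzc c hc]
    · obtain ⟨l, ⟨hl0, hl1⟩, hl⟩ := hact c hc.symm
      rw [hl, LinearMap.smul_apply, smul_eq_mul]
      nlinarith
  exact ⟨(mem_cell_iff_excess_le L a b).2 ⟨hz, hle⟩,
    fun h0 => (mem_cell_iff_excess_nonneg L a).2 ⟨hz, fun c => h0 ▸ hle c⟩⟩

theorem neighbors_of_facet (hPa : ParetoOptimal L a) (hw1 : ∑ i, w i = 1)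
    (hwpos : ∀ i, 0 < w i) (hwa : ∀ c, 0 ≤ excess L a c w) (hbw : excess L a b w = 0)
    (hact : ∀ c, excess L a c w = 0 → ∃ l ∈ Set.Icc (0 : ℝ) 1, excess L a c = l • excess L a b)
    {v : Fin E → ℝ} (hv : v ∈ sumZero E) (hbv : excess L a b v ≠ 0) :
    Neighbors L a b := by
  have hN := eventually_mem_cell hwpos hwa hact
  have hw := hN.self_of_nhds hw1 hbw.le
  have hline : ∀ v ∈ sumZero E, ∃ t ≠ (0 : ℝ),
      w + t • v ∈ cell L b ∧ (excess L a b v = 0 → w + t • v ∈ cell L a) := by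
    intro v hv
    obtain ⟨t, ht, hmem, htv⟩ := exists_ne_zero_add_smul_mem hN v (excess L a b v)
    have hsum : ∑ i, (w + t • v) i = 1 := by
      simp [Finset.sum_add_distrib, ← Finset.mul_sum, hw1, (mem_sumZero).1 hv]
    have := hmem hsum (by simpa [hbw] using htv)
    exact ⟨t, ht, this.1, fun h0 => this.2 (by simp [hbw, h0])⟩
  have hPb : ParetoOptimal L b := by
    refine ⟨⟨w, hw.1⟩, ?_⟩
    rw [dimSet, direction_affineSpan, le_antisymm (vectorSpan_cell_le_sumZero L b)
      (le_vectorSpan_of_forall_exists_add_smul_mem hw.1 fun v hv => by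
        obtain ⟨t, ht, hb, -⟩ := hline v hv
        exact ⟨t, ht, hb⟩)]
    have := finrank_sumZero_add_one hPa.pos
    omega
  have hspan : vectorSpan ℝ (cell L a ∩ cell L b) = sumZero E ⊓ LinearMap.ker (excess L a b) := by
    refine le_antisymm (le_inf ((vectorSpan_mono ℝ Set.inter_subset_left).trans
      (vectorSpan_cell_le_sumZero L a))
      (vectorSpan_le_ker_of_forall_eq fun z hz => excess_eq_zero_of_mem_inter hz)) ?_
    refine le_vectorSpan_of_forall_exists_add_smul_mem (s := cell L a ∩ cell L b)
      ⟨hw.2 hbw, hw.1⟩ fun v hv => ?_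
    obtain ⟨t, ht, hb, ha⟩ := hline v hv.1
    exact ⟨t, ht, ha hv.2, hb⟩
  refine ⟨hPa, hPb, ⟨w, hw.2 hbw, hw.1⟩, ?_⟩
  rw [dimSet, direction_affineSpan, hspan]
  have := Submodule.finrank_inf_ker_add_one _ hv hbv
  have := finrank_sumZero_add_one hPa.pos
  omega

end Facet

theorem ParetoOptimal.exists_neighbor_bound {K E : ℕ} {L : Fin K → Fin E → ℝ} {a : Fin K}
    (hL : ∀ a i, L a i ∈ Set.Icc (0 : ℝ) 1) (hP : ParetoOptimal L a) :
    ∃ ε > (0 : ℝ), ∀ u ∈ probSimplex E, u ∉ cell L a → ∃ b, Neighbors L a b ∧ L b ≠ L a ∧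
      ∀ c, -excess L a c u ≤ -excess L a b u / ε := by
  classical
  obtain ⟨c₀, hc₀, hmargin⟩ := hP.exists_margin
  refine ⟨c₀, hc₀, fun u hu hua => ?_⟩
  set φ := excess L a
  have hne_of_neg : ∀ {c}, φ c u < 0 → L c ≠ L a := fun h hc => by
    simp [φ, excess_eq_zero_of_eq L hc] at h
  have hq : ∃ c, φ c u < 0 := by
    by_contra! h
    exact hua ((mem_cell_iff_excess_nonneg L a).2 ⟨hu, h⟩)
  -- taking `x` off the kernels of these, no two non-proportional constraints become active at
  -- the same point of the segment from `x` to `u`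
  let ψ : Fin K × Fin K → (Fin E → ℝ) →ₗ[ℝ] ℝ := fun p => φ p.2 u • φ p.1 - φ p.1 u • φ p.2
  obtain ⟨x, hx, hxpos, hxc₀, hxψ⟩ := hmargin ((Finset.univ.image ψ).filter (· ≠ 0)) (by simp)
  have hφx := ((mem_cell_iff_excess_nonneg L a).1 hx).2
  obtain ⟨t, ⟨ht0, ht1⟩, bh, hbhu, hbhw, hwc, hprop⟩ := exists_crossing φ hφx
    (fun b c hne => hxψ _ (by simpa using ⟨⟨b, c, rfl⟩, hne⟩)) hq
  set w := (1 - t) • x + t • u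
  have hφw : ∀ c, φ c w = (1 - t) * φ c x + t * φ c u := fun c => by simp [w]
  have htpos : 0 < t := by
    rcases ht0.lt_or_eq with h | rfl
    · exact h
    · simp only [w, hφw] at hbhw
      linarith [hxc₀ bh (hne_of_neg hbhu)]
  set S := Finset.univ.filter fun c => φ c w = 0
  have hS : ∀ {c}, c ∈ S ↔ φ c w = 0 := by simp [S]
  have hr : ∀ c ∈ S, 0 ≤ φ c u / φ bh u := fun c hc => by
    have := hS.1 hc
    rw [hφw] at this
    exact div_nonneg_of_nonpos (by nlinarith [hφx c]) hbhu.le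
  obtain ⟨bs, hbsS, hrbs, hact⟩ := exists_max_smul S φ (φ bh) _ (fun c hc => hprop c (hS.1 hc))
    hr (hS.2 hbhw) (by simp [div_self hbhu.ne])
  have hbsu : φ bs u < 0 := by
    rw [hprop bs (hS.1 hbsS), LinearMap.smul_apply, smul_eq_mul]
    exact mul_neg_of_pos_of_neg hrbs hbhu
  have hw1 : ∑ i, w i = 1 := by
    simp [w, Finset.sum_add_distrib, ← Finset.mul_sum, hx.1.2, hu.2]
  have hwpos : ∀ i, 0 < w i := fun i => by
    simp only [w, Pi.add_apply, Pi.smul_apply, smul_eq_mul]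
    nlinarith [hxpos i, (hu.1 i).1]
  have hbs : Neighbors L a bs :=
    neighbors_of_facet hP hw1 hwpos hwc (hS.1 hbsS) (fun c hc => hact c (hS.2 hc))
      (sub_mem_sumZero hu.2 hw1) (show φ bs (u - w) ≠ 0 by simpa [hS.1 hbsS] using hbsu.ne)
  refine ⟨bs, hbs, hne_of_neg hbsu, fun c => ?_⟩
  exact neg_le_div_of_crossing htpos ht1.le hc₀ (excess_le_one L hL a c hx.1)
    (hφw c ▸ hwc c) (hxc₀ bs (hne_of_neg hbsu)) ((hφw bs).symm.trans (hS.1 hbsS))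

lemma Neighbors.congr_right {K E : ℕ} {L : Fin K → Fin E → ℝ} {a b b' : Fin K}
    (h : L b' = L b) (hN : Neighbors L a b) : Neighbors L a b' := by
  unfold Neighbors ParetoOptimal at *
  rwa [cell_congr L h]

lemma exists_mem_eq_of_maximal {K E : ℕ} {L : Fin K → Fin E → ℝ} {𝒜 : Finset (Fin K)}
    (h𝒜P : ∀ a ∈ 𝒜, ParetoOptimal L a)
    (h𝒜D : ∀ a ∈ 𝒜, ∀ b ∈ 𝒜, L a = L b → a = b)
    (h𝒜max : ∀ B : Finset (Fin K), (∀ a ∈ B, ParetoOptimal L a) →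
      (∀ a ∈ B, ∀ b ∈ B, L a = L b → a = b) → B.card ≤ 𝒜.card)
    {b : Fin K} (hb : ParetoOptimal L b) : ∃ b' ∈ 𝒜, L b' = L b := by
  classical
  by_contra! h
  have hb𝒜 : b ∉ 𝒜 := fun hb𝒜 => h b hb𝒜 rfl
  have := h𝒜max (insert b 𝒜)
    (by simpa [Finset.forall_mem_insert] using ⟨hb, h𝒜P⟩)
    (by
      simp only [Finset.forall_mem_insert]
      exact ⟨⟨fun _ => trivial, fun c hc hbc => absurd hbc.symm (h c hc)⟩,
        fun c hc => ⟨fun hcb => absurd hcb (h c hc), h𝒜D c hc⟩⟩)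
  rw [Finset.card_insert_of_notMem hb𝒜] at this
  omega

lemma eventually_exists_inNbhd {K E : ℕ} {L : Fin K → Fin E → ℝ} {𝒜 : Finset (Fin K)}
    (hL : ∀ a i, L a i ∈ Set.Icc (0 : ℝ) 1)
    (hrep : ∀ b, ParetoOptimal L b → ∃ b' ∈ 𝒜, L b' = L b)
    {a : Fin K} (ha : a ∈ 𝒜) (hP : ParetoOptimal L a) :
    ∀ᶠ ε in 𝓝[>] (0 : ℝ), ∀ u ∈ probSimplex E, ∃ b ∈ 𝒜, InNbhd L a b ∧
      ∀ c, -excess L a c u ≤ -excess L a b u / ε := by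
  obtain ⟨ε₀, hε₀, h⟩ := hP.exists_neighbor_bound hL
  filter_upwards [Ioc_mem_nhdsGT hε₀] with ε ⟨hε, hεε₀⟩ u hu
  by_cases hua : u ∈ cell L a
  · refine ⟨a, ha, Or.inl rfl, fun c => ?_⟩
    simpa [excess_eq_zero_of_eq L rfl] using ((mem_cell_iff_excess_nonneg L a).1 hua).2 c
  · obtain ⟨b, hN, hne, hb⟩ := h u hu hua
    obtain ⟨b', hb'𝒜, hb'⟩ := hrep b hN.2.1
    have hb'b : excess L a b' = excess L a b := by simp only [excess, hb']
    have hb0 : 0 ≤ -excess L a b u := by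
      simpa [excess_eq_zero_of_eq L rfl] using (le_div_iff₀ hε₀).1 (hb a)
    refine ⟨b', hb'𝒜, Or.inr ⟨hN.congr_right hb', hb' ▸ hne⟩, fun c => ?_⟩
    rw [hb'b]
    exact (hb c).trans (div_le_div_of_nonneg_left hb0 hε hεε₀)

theorem stmt2_general {K E : ℕ}
    (L : Fin K → Fin E → ℝ) (hL : ∀ a i, L a i ∈ Set.Icc (0 : ℝ) 1)
    (𝒜 : Finset (Fin K))
    (h𝒜P : ∀ a ∈ 𝒜, ParetoOptimal L a)
    (h𝒜D : ∀ a ∈ 𝒜, ∀ b ∈ 𝒜, L a = L b → a = b)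
    (h𝒜max : ∀ B : Finset (Fin K), (∀ a ∈ B, ParetoOptimal L a) →
      (∀ a ∈ B, ∀ b ∈ B, L a = L b → a = b) → B.card ≤ 𝒜.card) :
    ∃ ε > (0 : ℝ), ∀ a ∈ 𝒜, ∀ a' ∈ 𝒜, ∀ u ∈ cell L a',
      ∃ b ∈ 𝒜, InNbhd L a b ∧
        ∑ i, (L a i - L a' i) * u i ≤ (∑ i, (L a i - L b i) * u i) / ε := by
  have hrep := fun b => exists_mem_eq_of_maximal h𝒜P h𝒜D h𝒜max (b := b)
  have hsmall := (eventually_all_finset 𝒜).2 fun a ha =>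
    eventually_exists_inNbhd hL hrep ha (h𝒜P a ha)
  obtain ⟨ε, hε, hεpos⟩ := (hsmall.and self_mem_nhdsWithin).exists
  refine ⟨ε, hεpos, fun a ha a' _ u hu => ?_⟩
  obtain ⟨b, hb𝒜, hb, hbound⟩ := hε a ha u hu.1
  have hsum : ∀ c, ∑ i, (L a i - L c i) * u i = -excess L a c u := fun c => by
    simp [excess_apply, sub_mul]
  exact ⟨b, hb𝒜, hb, by simpa only [hsum] using hbound a'⟩

theorem stmt2 {K E : ℕ} (hK : 2 ≤ K) (hE : 2 ≤ E)
    (L : Fin K → Fin E → ℝ) (hL : ∀ a i, L a i ∈ Set.Icc (0 : ℝ) 1)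
    (𝒜 : Finset (Fin K))
    (h𝒜P : ∀ a ∈ 𝒜, ParetoOptimal L a)
    (h𝒜D : ∀ a ∈ 𝒜, ∀ b ∈ 𝒜, L a = L b → a = b)
    (h𝒜max : ∀ B : Finset (Fin K), (∀ a ∈ B, ParetoOptimal L a) →
      (∀ a ∈ B, ∀ b ∈ B, L a = L b → a = b) → B.card ≤ 𝒜.card) :
    ∃ ε > (0 : ℝ), ∀ a ∈ 𝒜, ∀ a' ∈ 𝒜, ∀ u ∈ cell L a',
      ∃ b ∈ 𝒜, InNbhd L a b ∧
        ∑ i, (L a i - L a' i) * u i ≤ (∑ i, (L a i - L b i) * u i) / ε :=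
  stmt2_general L hL 𝒜 h𝒜P h𝒜D h𝒜max
end

section
/- Let E, F ≥ 1 be integers, let φ, ψ : [E] → [F] be maps, and let Δ ∈ [−1,1]^E. Suppose there exist functions f, g : [F] → ℝ with f(φ(i)) + g(ψ(i)) = Δ_i for all i ∈ [E]. Then there exist functions f', g' : [F] → ℝ with f'(φ(i)) + g'(ψ(i)) = Δ_i for all i ∈ [E] and max(max_{h∈[F]} |f'(h)|, max_{h∈[F]} |g'(h)|) ≤ 1 + F. -/
/-!
Join the symbol `φ i` in a left copy of `[F]` to the symbol `ψ i` in a right copy, for every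
outcome `i`, and put the potential `f` on the left vertices and `-g` on the right ones.
Along each edge the potential jumps by `|Δ i| ≤ 1`, so on a connected component, whose paths
have fewer than `2F` edges, it oscillates by at most `2F - 1`. Subtracting from `f` and adding
to `g` a constant per component keeps every constraint `f (φ i) + g (ψ i) = Δ i` and centres
the potential in `[-(2F - 1)/2, (2F - 1)/2]`.
-/

open Finset

section Centering

variable {V : Type*} [Fintype V] {r : V → V → Prop} {x : V → ℝ} {D : ℝ}

theorem exists_classwise_const_abs_sub_le (hr : Equivalence r)
    (hx : ∀ u v, r u v → |x u - x v| ≤ D) :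
    ∃ c : V → ℝ, (∀ u v, r u v → c u = c v) ∧ ∀ v, |x v - c v| ≤ D / 2 := by
  classical
  let cls : V → Finset V := fun u => univ.filter (r u)
  have mem_cls : ∀ u, u ∈ cls u := fun u => by simp [cls, hr.refl u]
  refine ⟨fun u => (cls u).sup' ⟨u, mem_cls u⟩ x - D / 2, fun u v huv => ?_, fun v => ?_⟩
  · have : cls u = cls v := by
      ext w
      simpa [cls] using ⟨hr.trans (hr.symm huv), hr.trans huv⟩
    simp only [this]
  · have hle : x v ≤ (cls v).sup' ⟨v, mem_cls v⟩ x := le_sup' x (mem_cls v)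
    obtain ⟨w, hw, hmax⟩ := exists_mem_eq_sup' ⟨v, mem_cls v⟩ x
    have hvw : |x v - x w| ≤ D := hx v w (by simpa [cls] using hw)
    rw [abs_le] at hvw ⊢
    constructor <;> linarith

end Centering

namespace SimpleGraph

variable {V : Type*} {G : SimpleGraph V} {x : V → ℝ}

theorem Walk.abs_sub_le_length (hx : ∀ u v, G.Adj u v → |x u - x v| ≤ 1) {u v : V}
    (p : G.Walk u v) : |x u - x v| ≤ p.length := by
  induction p with
  | nil => simp
  | @cons a b c hab p ih =>
    calc |x a - x c| ≤ |x a - x b| + |x b - x c| := abs_sub_le _ _ _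
      _ ≤ 1 + p.length := add_le_add (hx a b hab) ih
      _ = (p.cons hab).length := by push_cast [length_cons]; ring

theorem Reachable.abs_sub_le_card_sub_one [Fintype V] [DecidableEq V]
    (hx : ∀ u v, G.Adj u v → |x u - x v| ≤ 1) {u v : V} (h : G.Reachable u v) :
    |x u - x v| ≤ Fintype.card V - 1 := by
  obtain ⟨p⟩ := h
  have hlen : p.toPath.1.length + 1 ≤ Fintype.card V := p.toPath.2.length_lt
  calc |x u - x v| ≤ p.toPath.1.length := p.toPath.1.abs_sub_le_length hx
    _ ≤ Fintype.card V - 1 := by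
      rw [le_sub_iff_add_le]; exact_mod_cast hlen

end SimpleGraph

open SimpleGraph in
theorem exists_potentials_abs_le {ι α β : Type*} [Fintype α] [Fintype β]
    (φ : ι → α) (ψ : ι → β) (Δ : ι → ℝ) (hΔ : ∀ i, |Δ i| ≤ 1)
    (f : α → ℝ) (g : β → ℝ) (hfg : ∀ i, f (φ i) + g (ψ i) = Δ i) :
    ∃ (f' : α → ℝ) (g' : β → ℝ), (∀ i, f' (φ i) + g' (ψ i) = Δ i) ∧
      (∀ a, |f' a| ≤ (Fintype.card α + Fintype.card β - 1) / 2) ∧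
      (∀ b, |g' b| ≤ (Fintype.card α + Fintype.card β - 1) / 2) := by
  classical
  let G : SimpleGraph (α ⊕ β) :=
    fromRel fun u v => ∃ i, u = .inl (φ i) ∧ v = .inr (ψ i)
  let x : α ⊕ β → ℝ := Sum.elim f (-g)
  have edge : ∀ i, G.Adj (.inl (φ i)) (.inr (ψ i)) := fun i =>
    (fromRel_adj _ _ _).2 ⟨Sum.inl_ne_inr, .inl ⟨i, rfl, rfl⟩⟩
  have hx : ∀ u v, G.Adj u v → |x u - x v| ≤ 1 := by
    rintro u v ⟨-, ⟨i, rfl, rfl⟩ | ⟨i, rfl, rfl⟩⟩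
    · simpa [x, hfg i] using hΔ i
    · simpa [x, abs_sub_comm, hfg i] using hΔ i
  obtain ⟨c, hc, hxc⟩ := exists_classwise_const_abs_sub_le G.reachable_is_equivalence
    fun u v huv => huv.abs_sub_le_card_sub_one hx
  rw [Fintype.card_sum, Nat.cast_add] at hxc
  refine ⟨fun a => f a - c (.inl a), fun b => g b + c (.inr b), fun i => ?_,
    fun a => by simpa [x] using hxc (.inl a), fun b => ?_⟩
  · linarith [hfg i, hc _ _ (edge i).reachable]
  · rw [← abs_neg]
    convert hxc (.inr b) using 2
    simp only [x, Sum.elim_inr, Pi.neg_apply]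
    ring

theorem stmt6_general (E F : ℕ)
    (φ ψ : Fin E → Fin F) (Δ : Fin E → ℝ) (hΔ : ∀ i, |Δ i| ≤ 1)
    (h : ∃ f g : Fin F → ℝ, ∀ i, f (φ i) + g (ψ i) = Δ i) :
    ∃ f' g' : Fin F → ℝ, (∀ i, f' (φ i) + g' (ψ i) = Δ i) ∧
      (∀ h : Fin F, |f' h| ≤ 1 + F) ∧ (∀ h : Fin F, |g' h| ≤ 1 + F) := by
  obtain ⟨f, g, hfg⟩ := h
  obtain ⟨f', g', hsum, hf', hg'⟩ := exists_potentials_abs_le φ ψ Δ hΔ f g hfg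
  have hbound : ((Fintype.card (Fin F) + Fintype.card (Fin F) - 1) / 2 : ℝ) ≤ 1 + F := by
    rw [Fintype.card_fin]; linarith
  exact ⟨f', g', hsum, fun a => (hf' a).trans hbound, fun b => (hg' b).trans hbound⟩

theorem stmt6 (E F : ℕ) (hE : 1 ≤ E) (hF : 1 ≤ F)
    (φ ψ : Fin E → Fin F) (Δ : Fin E → ℝ) (hΔ : ∀ i, |Δ i| ≤ 1)
    (h : ∃ f g : Fin F → ℝ, ∀ i, f (φ i) + g (ψ i) = Δ i) :
    ∃ f' g' : Fin F → ℝ, (∀ i, f' (φ i) + g' (ψ i) = Δ i) ∧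
      (∀ h : Fin F, |f' h| ≤ 1 + F) ∧ (∀ h : Fin F, |g' h| ≤ 1 + F) :=
  stmt6_general E F φ ψ Δ hΔ h
end

section
/- Let (Ω, ℱ, (ℱ_t)_{t=0}^n, P) be a filtered probability space, K ∈ ℕ, 𝒜 ⊆ [K] nonempty, and η > 0. Let (Z_t)_{t∈[n]} be an ℝ^K-valued predictable process (Z_t is ℱ_{t−1}-measurable), (Ẑ_t)_{t∈[n]} an ℝ^K-valued adapted process, (β_t)_{t∈[n]} an ℝ^K-valued predictable process, and set Z̃_t = Ẑ_t − β_t. Define Q_{ta} = 1{a ∈ 𝒜}·exp(−η·∑_{s=1}^{t−1} Z̃_{sa}) / ∑_{b∈𝒜} exp(−η·∑_{s=1}^{t−1} Z̃_{sb}). Assume that almost surely for all t ∈ [n] and a ∈ 𝒜: (a) η·|Ẑ_{ta}| ≤ 1; (b) η·β_{ta} ≤ 1; (c) η·E[Ẑ_{ta}² | ℱ_{t−1}] ≤ β_{ta}; (d) E[Ẑ_{ta} | ℱ_{t−1}] = Z_{ta}. Let A* be an 𝒜-valued random variable with A* ∈ argmin_{a∈𝒜} ∑_{t=1}^n Z_{ta}.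 Then for every δ with 0 < δ ≤ 1/(K+1), with probability at least 1 − (K+1)δ: ∑_{t=1}^n ∑_{a∈𝒜} Q_{ta}·(Z_{ta} − Z_{tA*}) ≤ (3/η)·log(1/δ) + η·∑_{t=1}^n ∑_{a∈𝒜} Q_{ta}·Ẑ_{ta}² + 5·∑_{t=1}^n ∑_{a∈𝒜} Q_{ta}·β_{ta}. -/
/-!
The regret of the weights `Q` against the estimated losses `Ẑ - β` is bounded deterministically
by the potential argument for exponential weights, using `exp (v - u) ≤ 1 - u + u² + 22/5 v` for
`|u| ≤ 1`, `0 ≤ v ≤ 1`. The estimates are compared with the true losses by Chernoff bounds: since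
`exp x ≤ 1 + x + c x²` on a bounded range and `η E[Ẑ² | ℱ] ≤ β`, the products
`exp (6/5 η Σ (Ẑ_a - Z_a - β_a))` (one for each arm `a`) and
`exp (6/7 η Σ (⟨Q, Z - Ẑ⟩ - 3/5 ⟨Q, β⟩))` are supermartingales, so by Markov's inequality each
exceeds `1/δ` with probability at most `δ`. Off these `|𝒜| + 1` events the three inequalities add
up to the claim, with `1 + 5/6 + 7/6 = 3` in front of `log (1/δ) / η` and `22/5 + 3/5 = 5` in
front of the bias.
-/

open MeasureTheory Finset Real
open scoped BigOperators

theorem exp_le_quartic_of_abs_le_one {x : ℝ} (hx : |x| ≤ 1) :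
    exp x ≤ 1 + x + x ^ 2 / 2 + x ^ 3 / 6 + 5 / 96 * x ^ 4 := by
  have h := (abs_sub_le_iff.1 (exp_bound hx (n := 4) (by norm_num))).1
  have hx4 : |x| ^ 4 = x ^ 4 := by rw [← abs_pow, abs_of_nonneg (by positivity)]
  norm_num [sum_range_succ, Nat.factorial, hx4] at h
  linarith

theorem exp_le_one_add_add_seven_tenths_sq {x : ℝ} (hx : |x| ≤ 6 / 7) :
    exp x ≤ 1 + x + 7 / 10 * x ^ 2 := by
  obtain ⟨hl, hr⟩ := abs_le.1 hx
  have h := exp_le_quartic_of_abs_le_one (hx.trans (by norm_num))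
  nlinarith [mul_nonneg (sq_nonneg x) (sub_nonneg.2 hr),
    mul_nonneg (sq_nonneg x) (by linarith : (0:ℝ) ≤ x + 6 / 7)]

theorem exp_le_one_add_add_five_sixths_sq {x : ℝ} (hx : |x| ≤ 6 / 5) :
    exp x ≤ 1 + x + 5 / 6 * x ^ 2 := by
  obtain ⟨hl, hr⟩ := abs_le.1 hx
  have h := exp_le_quartic_of_abs_le_one (x := x / 2) (by rw [abs_div, abs_two]; linarith)
  have hsq : exp x = exp (x / 2) ^ 2 := by rw [← exp_nat_mul]; ring_nf
  rw [hsq]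
  refine (pow_le_pow_left₀ (exp_pos _).le h 2).trans ?_
  nlinarith [mul_nonneg (sq_nonneg x) (sub_nonneg.2 hr),
    mul_nonneg (mul_nonneg (sq_nonneg x) (sub_nonneg.2 hr)) (sub_nonneg.2 hr),
    mul_nonneg (sq_nonneg (x ^ 2)) (sub_nonneg.2 hr),
    mul_nonneg (sq_nonneg x) (by linarith : (0:ℝ) ≤ x + 6 / 5),
    mul_nonneg (mul_nonneg (sq_nonneg x) (by linarith : (0:ℝ) ≤ x + 6 / 5))
      (by linarith : (0:ℝ) ≤ 6 / 5 - x),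
    sq_nonneg x, sq_nonneg (x ^ 2), sq_nonneg (x ^ 3)]

theorem exp_le_one_add_mul_of_nonneg_of_le_one {v : ℝ} (h0 : 0 ≤ v) (h1 : v ≤ 1) :
    exp v ≤ 1 + (exp 1 - 1) * v := by
  have := convexOn_exp.2 (Set.mem_univ 0) (Set.mem_univ 1) (sub_nonneg.2 h1) h0 (by ring)
  simp only [smul_eq_mul, mul_zero, mul_one, exp_zero, zero_add] at this
  linarith

theorem exp_sub_le_of_abs_le_one {u v : ℝ} (hu : |u| ≤ 1) (hv0 : 0 ≤ v) (hv1 : v ≤ 1) :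
    exp (v - u) ≤ 1 - u + u ^ 2 + 22 / 5 * v := by
  obtain ⟨hul, hur⟩ := abs_le.1 hu
  have hsq : 0 ≤ 1 - u ^ 2 := by nlinarith
  have hu' : exp (-u) ≤ 1 - u + 69 / 96 * u ^ 2 := by
    have := exp_le_quartic_of_abs_le_one (x := -u) (by rwa [abs_neg])
    nlinarith [mul_nonneg (sq_nonneg u) (by linarith : (0:ℝ) ≤ 1 + u),
      mul_nonneg (sq_nonneg u) hsq]
  have he0 : 0 ≤ exp 1 - 1 := by linarith [add_one_le_exp 1]
  have he1 : exp 1 - 1 ≤ 1.7182818286 := by linarith [exp_one_lt_d9]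
  have hprod : exp v * exp (-u) ≤ (1 + (exp 1 - 1) * v) * (1 - u + 69 / 96 * u ^ 2) :=
    mul_le_mul (exp_le_one_add_mul_of_nonneg_of_le_one hv0 hv1) hu' (exp_pos _).le
      (by linarith [mul_nonneg he0 hv0])
  -- the cross terms `(e - 1) v (1 - u + 69/96 u²)` are split between `u²` and `v`
  have hvu : v * u ^ 2 ≤ 2275 / 10000 * u ^ 2 + 7725 / 10000 * v := by
    nlinarith [mul_nonneg (sub_nonneg.2 hv1) (sq_nonneg u), mul_nonneg hv0 hsq]
  have h5 : (exp 1 - 1) * (v * (1 - u)) ≤ 1.7182818286 * (2 * v) :=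
    mul_le_mul he1 (by nlinarith) (mul_nonneg hv0 (by linarith)) (by norm_num)
  have h6 : (exp 1 - 1) * (v * u ^ 2) ≤
      1.7182818286 * (2275 / 10000 * u ^ 2 + 7725 / 10000 * v) :=
    mul_le_mul he1 hvu (mul_nonneg hv0 (sq_nonneg u)) (by norm_num)
  rw [sub_eq_add_neg, exp_add]
  nlinarith

theorem sum_mul_exp_sub_le {ι : Type*} {s : Finset ι} {q u v : ι → ℝ}
    (hq0 : ∀ a ∈ s, 0 ≤ q a) (hq1 : ∑ a ∈ s, q a = 1)
    (hu : ∀ a ∈ s, |u a| ≤ 1) (hv : ∀ a ∈ s, 0 ≤ v a ∧ v a ≤ 1) :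
    ∑ a ∈ s, q a * exp (v a - u a) - 1 ≤ ∑ a ∈ s, q a * (-u a + u a ^ 2 + 22 / 5 * v a) := by
  have h : ∑ a ∈ s, q a * exp (v a - u a) ≤
      ∑ a ∈ s, q a * (1 + (-u a + u a ^ 2 + 22 / 5 * v a)) :=
    sum_le_sum fun a ha => mul_le_mul_of_nonneg_left
      (by linarith [exp_sub_le_of_abs_le_one (hu a ha) (hv a ha).1 (hv a ha).2]) (hq0 a ha)
  simp only [mul_add, mul_one, sum_add_distrib, hq1] at h ⊢
  linarith

theorem abs_sum_mul_le_of_abs_le {ι : Type*} {s : Finset ι} {q x : ι → ℝ} {C : ℝ}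
    (hq0 : ∀ a ∈ s, 0 ≤ q a) (hq1 : ∑ a ∈ s, q a = 1) (hx : ∀ a ∈ s, |x a| ≤ C) :
    |∑ a ∈ s, q a * x a| ≤ C := by
  calc |∑ a ∈ s, q a * x a| ≤ ∑ a ∈ s, q a * C := by
        refine (abs_sum_le_sum_abs _ _).trans (sum_le_sum fun a ha => ?_)
        rw [abs_mul, abs_of_nonneg (hq0 a ha)]
        exact mul_le_mul_of_nonneg_left (hx a ha) (hq0 a ha)
    _ = C := by rw [← sum_mul, hq1, one_mul]

section ExpWeights

variable {ι : Type*} (𝒜 : Finset ι) (η : ℝ) (ℓ : ℕ → ι → ℝ)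

noncomputable def expPotential (t : ℕ) : ℝ :=
  ∑ b ∈ 𝒜, exp (-η * ∑ s ∈ Icc 1 t, ℓ s b)

variable {𝒜 η ℓ}

theorem expPotential_pos (h𝒜 : 𝒜.Nonempty) (t : ℕ) : 0 < expPotential 𝒜 η ℓ t :=
  sum_pos (fun _ _ => exp_pos _) h𝒜

theorem expPotential_zero : expPotential 𝒜 η ℓ 0 = #𝒜 := by
  simp [expPotential]

theorem expPotential_succ (t : ℕ) :
    expPotential 𝒜 η ℓ (t + 1) =
      ∑ a ∈ 𝒜, exp (-η * ∑ s ∈ Icc 1 t, ℓ s a) * exp (-η * ℓ (t + 1) a) := by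
  simp only [expPotential, sum_Icc_succ_top (Nat.le_add_left 1 t), mul_add, exp_add]

/-- Round `t` uses the losses of rounds `1, …, t - 1`; rounds `0` and `1` both get uniform
weights. -/
noncomputable def expWeights [DecidableEq ι] (𝒜 : Finset ι) (η : ℝ) (ℓ : ℕ → ι → ℝ) (t : ℕ)
    (a : ι) : ℝ :=
  (if a ∈ 𝒜 then exp (-η * ∑ s ∈ Icc 1 (t - 1), ℓ s a) else 0) / expPotential 𝒜 η ℓ (t - 1)

variable [DecidableEq ι]

theorem expWeights_nonneg (t : ℕ) (a : ι) : 0 ≤ expWeights 𝒜 η ℓ t a :=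
  div_nonneg (by split_ifs <;> positivity) (sum_nonneg fun _ _ => (exp_pos _).le)

theorem expWeights_of_mem {a : ι} (ha : a ∈ 𝒜) (t : ℕ) :
    expWeights 𝒜 η ℓ t a =
      exp (-η * ∑ s ∈ Icc 1 (t - 1), ℓ s a) / expPotential 𝒜 η ℓ (t - 1) := by
  rw [expWeights, if_pos ha]

theorem sum_expWeights (h𝒜 : 𝒜.Nonempty) (t : ℕ) : ∑ a ∈ 𝒜, expWeights 𝒜 η ℓ t a = 1 := by
  rw [sum_congr rfl fun a ha => expWeights_of_mem ha t, ← sum_div]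
  exact div_self (expPotential_pos h𝒜 _).ne'

theorem sum_expWeights_mul_exp (t : ℕ) :
    ∑ a ∈ 𝒜, expWeights 𝒜 η ℓ (t + 1) a * exp (-η * ℓ (t + 1) a) =
      expPotential 𝒜 η ℓ (t + 1) / expPotential 𝒜 η ℓ t := by
  rw [expPotential_succ, sum_div]
  refine sum_congr rfl fun a ha => ?_
  rw [expWeights_of_mem ha, Nat.add_sub_cancel, div_mul_eq_mul_div]

-- `log (W n / W 0)` telescopes into the per-round log-moments, and `log x ≤ x - 1`.
theorem neg_mul_sum_sub_log_card_le {a : ι} (ha : a ∈ 𝒜) (n : ℕ) :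
    -η * ∑ t ∈ Icc 1 n, ℓ t a - log #𝒜 ≤
      ∑ t ∈ Icc 1 n, (∑ b ∈ 𝒜, expWeights 𝒜 η ℓ t b * exp (-η * ℓ t b) - 1) := by
  have hW := expPotential_pos (η := η) (ℓ := ℓ) ⟨a, ha⟩
  have hpot : ∀ m, log (expPotential 𝒜 η ℓ m) - log #𝒜 ≤
      ∑ t ∈ Icc 1 m, (∑ b ∈ 𝒜, expWeights 𝒜 η ℓ t b * exp (-η * ℓ t b) - 1) := by
    intro m
    induction m with
    | zero => simp [expPotential_zero]
    | succ m ih =>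
      rw [sum_Icc_succ_top (Nat.le_add_left 1 m), sum_expWeights_mul_exp]
      have hstep := log_le_sub_one_of_pos (div_pos (hW (m + 1)) (hW m))
      rw [log_div (hW _).ne' (hW _).ne'] at hstep
      linarith
  have hlow : -η * ∑ t ∈ Icc 1 n, ℓ t a ≤ log (expPotential 𝒜 η ℓ n) := by
    rw [← log_exp (-η * _)]
    exact log_le_log (exp_pos _) (single_le_sum (f := fun b => exp (-η * ∑ s ∈ Icc 1 n, ℓ s b))
      (fun _ _ => (exp_pos _).le) ha)
  linarith [hpot n]

theorem expWeights_regret (hη : 0 ≤ η) {zh b : ℕ → ι → ℝ} {n : ℕ}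
    (hzh : ∀ t ∈ Icc 1 n, ∀ a ∈ 𝒜, η * |zh t a| ≤ 1)
    (hb : ∀ t ∈ Icc 1 n, ∀ a ∈ 𝒜, 0 ≤ b t a ∧ η * b t a ≤ 1) {a : ι} (ha : a ∈ 𝒜) :
    -η * ∑ t ∈ Icc 1 n, (zh t a - b t a) - log #𝒜 ≤
      ∑ t ∈ Icc 1 n, ∑ c ∈ 𝒜, expWeights 𝒜 η (fun t c => zh t c - b t c) t c *
        (-(η * zh t c) + (η * zh t c) ^ 2 + 22 / 5 * (η * b t c)) := by
  refine (neg_mul_sum_sub_log_card_le (ℓ := fun t c => zh t c - b t c) ha n).trans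
    (sum_le_sum fun t ht => ?_)
  have hmul : ∀ c, -η * (zh t c - b t c) = η * b t c - η * zh t c := fun c => by ring
  simp only [hmul]
  exact sum_mul_exp_sub_le (fun c _ => expWeights_nonneg t c) (sum_expWeights ⟨a, ha⟩ t)
    (fun c hc => by rw [abs_mul, abs_of_nonneg hη]; exact hzh t ht c hc)
    (fun c hc => ⟨mul_nonneg hη (hb t ht c hc).1, (hb t ht c hc).2⟩)

theorem stronglyMeasurable_expWeights {Ω : Type*} {mΩ : MeasurableSpace Ω}
    (ℱ : Filtration ℕ mΩ) {ℓ : ℕ → ι → Ω → ℝ} {n t : ℕ}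
    (hℓ : ∀ s ∈ Icc 1 n, ∀ b, StronglyMeasurable[ℱ s] (ℓ s b)) (ht : t ∈ Icc 1 n) (a : ι) :
    StronglyMeasurable[ℱ (t - 1)] fun ω => expWeights 𝒜 η (fun s b => ℓ s b ω) t a := by
  have hexp : ∀ b, Measurable[ℱ (t - 1)] fun ω => exp (-η * ∑ s ∈ Icc 1 (t - 1), ℓ s b ω) :=
    fun b => (measurable_const.mul (Finset.measurable_fun_sum _ fun s hs =>
      ((hℓ s (Icc_subset_Icc_right ((Nat.sub_le t 1).trans (mem_Icc.1 ht).2) hs) b).mono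
        (ℱ.mono (mem_Icc.1 hs).2)).measurable)).exp
  refine (Measurable.div ?_ (Finset.measurable_fun_sum _ fun b _ => hexp b)).stronglyMeasurable
  split_ifs
  exacts [hexp a, measurable_const]

end ExpWeights

section CondExp

variable {Ω : Type*} {m mΩ : MeasurableSpace Ω} {μ : Measure Ω}

theorem ae_abs_le_inv_of_mul_abs_le_one {f : Ω → ℝ} {η : ℝ} (hη : 0 < η)
    (h : ∀ᵐ ω ∂μ, η * |f ω| ≤ 1) : ∀ᵐ ω ∂μ, |f ω| ≤ η⁻¹ := by
  filter_upwards [h] with ω hω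
  rw [← one_div, le_div_iff₀ hη]
  linarith

theorem ae_abs_le_inv_of_condExp_eq {f z : Ω → ℝ} {η : ℝ} (hη : 0 < η)
    (habs : ∀ᵐ ω ∂μ, η * |f ω| ≤ 1) (hmean : μ[f|m] =ᵐ[μ] z) : ∀ᵐ ω ∂μ, |z ω| ≤ η⁻¹ := by
  filter_upwards [ae_bdd_abs_condExp_of_ae_bdd_abs (m := m)
    (ae_abs_le_inv_of_mul_abs_le_one hη habs), hmean] with ω h1 h2
  rwa [← h2]

theorem ae_nonneg_of_mul_condExp_sq_le {f b : Ω → ℝ} {η : ℝ} (hη : 0 ≤ η)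
    (h : ∀ᵐ ω ∂μ, η * μ[fun ω' => f ω' ^ 2|m] ω ≤ b ω) : ∀ᵐ ω ∂μ, 0 ≤ b ω := by
  filter_upwards [h, condExp_nonneg (m := m) (ae_of_all μ fun ω => sq_nonneg (f ω))] with ω h1 h2
  exact (mul_nonneg hη h2).trans h1

theorem integrable_sq_of_ae_abs_le [IsFiniteMeasure μ] {f : Ω → ℝ} {C : ℝ}
    (hf : AEStronglyMeasurable f μ) (h : ∀ᵐ ω ∂μ, |f ω| ≤ C) :
    Integrable (fun ω => f ω ^ 2) μ :=
  Integrable.of_bound (hf.pow 2) (C ^ 2) <| by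
    filter_upwards [h] with ω hω
    rw [norm_pow, norm_eq_abs]
    exact pow_le_pow_left₀ (abs_nonneg _) hω 2

theorem integrable_exp_mul_of_le_quadratic [IsFiniteMeasure μ] {Y : Ω → ℝ} {θ c : ℝ}
    (hY : Integrable Y μ) (hY2 : Integrable (fun ω => Y ω ^ 2) μ)
    (hexp : ∀ᵐ ω ∂μ, exp (θ * Y ω) ≤ 1 + θ * Y ω + c * (θ * Y ω) ^ 2) :
    Integrable (fun ω => exp (θ * Y ω)) μ := by
  refine (((integrable_const 1).add (hY.const_mul θ)).add (hY2.const_mul (c * θ ^ 2))).mono'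
    (continuous_exp.comp_aestronglyMeasurable (hY.aestronglyMeasurable.const_mul θ)) ?_
  filter_upwards [hexp] with ω hω
  rw [norm_of_nonneg (exp_pos _).le]
  show _ ≤ 1 + θ * Y ω + c * θ ^ 2 * Y ω ^ 2
  linarith [show (θ * Y ω) ^ 2 = θ ^ 2 * Y ω ^ 2 by ring]

theorem condExp_exp_mul_le [IsFiniteMeasure μ] (hm : m ≤ mΩ) {Y M B : Ω → ℝ} {θ c : ℝ}
    (hc : 0 ≤ c) (hY : Integrable Y μ) (hY2 : Integrable (fun ω => Y ω ^ 2) μ)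
    (hexp : ∀ᵐ ω ∂μ, exp (θ * Y ω) ≤ 1 + θ * Y ω + c * (θ * Y ω) ^ 2)
    (hYM : μ[Y|m] =ᵐ[μ] M) (hYB : μ[fun ω => Y ω ^ 2|m] ≤ᵐ[μ] B) :
    μ[fun ω => exp (θ * Y ω)|m] ≤ᵐ[μ] fun ω => exp (θ * M ω + c * θ ^ 2 * B ω) := by
  set Y2 : Ω → ℝ := fun ω => Y ω ^ 2
  set φ : Ω → ℝ := (fun _ => 1) + θ • Y + (c * θ ^ 2) • Y2
  have hφ : Integrable φ μ := ((integrable_const 1).add (hY.smul θ)).add (hY2.smul (c * θ ^ 2))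
  have hφY : ∀ ω, φ ω = 1 + θ * Y ω + c * (θ * Y ω) ^ 2 := fun ω => by
    simp only [φ, Y2, Pi.add_apply, Pi.smul_apply, smul_eq_mul]; ring
  have hφcond : μ[φ|m] =ᵐ[μ] fun ω => 1 + θ * μ[Y|m] ω + c * θ ^ 2 * μ[Y2|m] ω := by
    filter_upwards [condExp_add ((integrable_const 1).add (hY.smul θ)) (hY2.smul (c * θ ^ 2)) m,
      condExp_add (integrable_const 1) (hY.smul θ) m, condExp_smul (μ := μ) θ Y m,
      condExp_smul (μ := μ) (c * θ ^ 2) Y2 m] with ω h1 h2 h3 h4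
    simp only [φ, h1, Pi.add_apply, h2, h3, h4, condExp_const hm, Pi.smul_apply, smul_eq_mul]
  filter_upwards [condExp_mono (m := m) (integrable_exp_mul_of_le_quadratic hY hY2 hexp) hφ
    (hexp.mono fun ω hω => (hφY ω).symm ▸ hω), hφcond, hYM, hYB] with ω h1 h2 h3 h4
  rw [h2, h3] at h1
  have h5 := mul_le_mul_of_nonneg_left h4 (mul_nonneg hc (sq_nonneg θ))
  linarith [add_one_le_exp (θ * M ω + c * θ ^ 2 * B ω)]

theorem condExp_exp_sub_le_one [IsFiniteMeasure μ] (hm : m ≤ mΩ) {Y M B : Ω → ℝ} {θ c : ℝ}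
    (hc : 0 ≤ c) (hY : Integrable Y μ) (hY2 : Integrable (fun ω => Y ω ^ 2) μ)
    (hexp : ∀ᵐ ω ∂μ, exp (θ * Y ω) ≤ 1 + θ * Y ω + c * (θ * Y ω) ^ 2)
    (hM : StronglyMeasurable[m] M) (hB : StronglyMeasurable[m] B)
    (hYM : μ[Y|m] =ᵐ[μ] M) (hYB : μ[fun ω => Y ω ^ 2|m] ≤ᵐ[μ] B) :
    μ[fun ω => exp (θ * (Y ω - M ω) - c * θ ^ 2 * B ω)|m] ≤ᵐ[μ] 1 := by
  by_cases hint : Integrable (fun ω => exp (θ * (Y ω - M ω) - c * θ ^ 2 * B ω)) μ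
  swap
  · rw [condExp_of_not_integrable hint]
    exact ae_of_all _ fun _ => zero_le_one
  set A : Ω → ℝ := fun ω => θ * M ω + c * θ ^ 2 * B ω
  have hsplit : (fun ω => exp (θ * (Y ω - M ω) - c * θ ^ 2 * B ω)) =
      (fun ω => exp (-A ω)) * fun ω => exp (θ * Y ω) := by
    funext ω
    rw [Pi.mul_apply, ← exp_add]
    congr 1
    ring
  have hA : StronglyMeasurable[m] fun ω => exp (-A ω) :=
    continuous_exp.comp_stronglyMeasurable ((hM.const_mul θ).add (hB.const_mul _)).neg
  rw [hsplit] at hint ⊢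
  filter_upwards [condExp_mul_of_stronglyMeasurable_left hA hint
    (integrable_exp_mul_of_le_quadratic hY hY2 hexp),
    condExp_exp_mul_le hm hc hY hY2 hexp hYM hYB] with ω h1 h2
  rw [h1, Pi.mul_apply, Pi.one_apply]
  calc _ ≤ exp (-A ω) * exp (A ω) := mul_le_mul_of_nonneg_left h2 (exp_pos _).le
    _ = 1 := by rw [← exp_add, neg_add_cancel, exp_zero]

theorem condExp_exp_deviation_le_one [IsFiniteMeasure μ] (hm : m ≤ mΩ) {η : ℝ} (hη : 0 < η)
    {zh z b : Ω → ℝ} (hzh : AEStronglyMeasurable zh μ) (hz : StronglyMeasurable[m] z)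
    (hb : StronglyMeasurable[m] b) (habs : ∀ᵐ ω ∂μ, η * |zh ω| ≤ 1)
    (hvar : ∀ᵐ ω ∂μ, η * μ[fun ω' => zh ω' ^ 2|m] ω ≤ b ω) (hmean : μ[zh|m] =ᵐ[μ] z) :
    μ[fun ω => exp (6 / 5 * η * (zh ω - z ω - b ω))|m] ≤ᵐ[μ] 1 := by
  have hbdd := ae_abs_le_inv_of_mul_abs_le_one hη habs
  have key := condExp_exp_sub_le_one hm (θ := 6 / 5 * η) (c := 5 / 6) (B := fun ω => η⁻¹ * b ω)
    (by norm_num) (Integrable.of_bound hzh _ hbdd) (integrable_sq_of_ae_abs_le hzh hbdd)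
    (habs.mono fun ω hω => exp_le_one_add_add_five_sixths_sq (by
      rw [abs_mul, abs_of_pos (by positivity)]; linarith))
    hz (hb.const_mul η⁻¹) hmean (hvar.mono fun ω hω => (le_inv_mul_iff₀ hη).2 hω)
  convert key using 4 with ω
  field_simp

section Weighted

variable {ι : Type*} {s : Finset ι} {q : ι → Ω → ℝ}

theorem integrable_mul_of_sum_eq_one {g : Ω → ℝ} (hm : m ≤ mΩ)
    (hq : ∀ a ∈ s, StronglyMeasurable[m] (q a)) (hq0 : ∀ ω, ∀ a ∈ s, 0 ≤ q a ω)
    (hq1 : ∀ ω, ∑ a ∈ s, q a ω = 1) {a : ι} (ha : a ∈ s) (hg : Integrable g μ) :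
    Integrable (fun ω => q a ω * g ω) μ :=
  hg.bdd_mul (c := 1) ((hq a ha).mono hm).aestronglyMeasurable <| ae_of_all _ fun ω => by
    rw [norm_of_nonneg (hq0 ω a ha), ← hq1 ω]
    exact single_le_sum (hq0 ω) ha

theorem condExp_sum_mul_of_stronglyMeasurable {f : ι → Ω → ℝ} (hm : m ≤ mΩ)
    (hq : ∀ a ∈ s, StronglyMeasurable[m] (q a)) (hq0 : ∀ ω, ∀ a ∈ s, 0 ≤ q a ω)
    (hq1 : ∀ ω, ∑ a ∈ s, q a ω = 1) (hf : ∀ a ∈ s, Integrable (f a) μ) :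
    μ[fun ω => ∑ a ∈ s, q a ω * f a ω|m] =ᵐ[μ] fun ω => ∑ a ∈ s, q a ω * μ[f a|m] ω := by
  have hqf := fun a ha => integrable_mul_of_sum_eq_one hm hq hq0 hq1 ha (hf a ha)
  have hsum : (fun ω => ∑ a ∈ s, q a ω * f a ω) = ∑ a ∈ s, fun ω => q a ω * f a ω := by
    funext ω; simp
  have hpull : ∀ᵐ ω ∂μ, ∀ a ∈ s, μ[fun ω => q a ω * f a ω|m] ω = q a ω * μ[f a|m] ω :=
    (Filter.eventually_all_finset s).2 fun a ha =>
      condExp_mul_of_stronglyMeasurable_left (hq a ha) (hqf a ha) (hf a ha)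
  rw [hsum]
  filter_upwards [condExp_finsetSum hqf m, hpull] with ω h1 h2
  rw [h1, Finset.sum_apply]
  exact sum_congr rfl h2

theorem condExp_sq_sum_mul_le {f : ι → Ω → ℝ} (hm : m ≤ mΩ)
    (hq : ∀ a ∈ s, StronglyMeasurable[m] (q a)) (hq0 : ∀ ω, ∀ a ∈ s, 0 ≤ q a ω)
    (hq1 : ∀ ω, ∑ a ∈ s, q a ω = 1) (hf : ∀ a ∈ s, AEStronglyMeasurable (f a) μ)
    (hf2 : ∀ a ∈ s, Integrable (fun ω => f a ω ^ 2) μ) :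
    μ[fun ω => (∑ a ∈ s, q a ω * f a ω) ^ 2|m] ≤ᵐ[μ]
      fun ω => ∑ a ∈ s, q a ω * μ[fun ω => f a ω ^ 2|m] ω := by
  have hjensen : ∀ ω, (∑ a ∈ s, q a ω * f a ω) ^ 2 ≤ ∑ a ∈ s, q a ω * f a ω ^ 2 := fun ω => by
    simpa only [smul_eq_mul] using (even_two.convexOn_pow (𝕜 := ℝ)).map_sum_le (hq0 ω) (hq1 ω)
      (fun _ _ => Set.mem_univ _)
  have hdom : Integrable (fun ω => ∑ a ∈ s, q a ω * f a ω ^ 2) μ :=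
    integrable_finsetSum s fun a ha => integrable_mul_of_sum_eq_one hm hq hq0 hq1 ha (hf2 a ha)
  have hsq : Integrable (fun ω => (∑ a ∈ s, q a ω * f a ω) ^ 2) μ :=
    hdom.mono' ((Finset.aestronglyMeasurable_fun_sum s fun a ha =>
      ((hq a ha).mono hm).aestronglyMeasurable.mul (hf a ha)).pow 2)
      (ae_of_all _ fun ω => by rw [norm_of_nonneg (sq_nonneg _)]; exact hjensen ω)
  exact (condExp_mono hsq hdom (ae_of_all _ hjensen)).trans_eq
    (condExp_sum_mul_of_stronglyMeasurable hm hq hq0 hq1 hf2)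

theorem condExp_exp_weighted_deviation_le_one [IsFiniteMeasure μ] (hm : m ≤ mΩ) {η : ℝ}
    (hη : 0 < η) {zh z b : ι → Ω → ℝ}
    (hq : ∀ a ∈ s, StronglyMeasurable[m] (q a)) (hq0 : ∀ ω, ∀ a ∈ s, 0 ≤ q a ω)
    (hq1 : ∀ ω, ∑ a ∈ s, q a ω = 1) (hzh : ∀ a ∈ s, AEStronglyMeasurable (zh a) μ)
    (hz : ∀ a ∈ s, StronglyMeasurable[m] (z a)) (hb : ∀ a ∈ s, StronglyMeasurable[m] (b a))
    (habs : ∀ a ∈ s, ∀ᵐ ω ∂μ, η * |zh a ω| ≤ 1)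
    (hvar : ∀ a ∈ s, ∀ᵐ ω ∂μ, η * μ[fun ω' => zh a ω' ^ 2|m] ω ≤ b a ω)
    (hmean : ∀ a ∈ s, μ[zh a|m] =ᵐ[μ] z a) :
    μ[fun ω => exp (6 / 7 * η *
      (∑ a ∈ s, q a ω * (z a ω - zh a ω) - 3 / 5 * ∑ a ∈ s, q a ω * b a ω))|m] ≤ᵐ[μ] 1 := by
  have hbdd : ∀ a ∈ s, ∀ᵐ ω ∂μ, |zh a ω| ≤ η⁻¹ := fun a ha =>
    ae_abs_le_inv_of_mul_abs_le_one hη (habs a ha)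
  have hY : AEStronglyMeasurable (fun ω => ∑ a ∈ s, q a ω * zh a ω) μ :=
    Finset.aestronglyMeasurable_fun_sum s fun a ha =>
      ((hq a ha).mono hm).aestronglyMeasurable.mul (hzh a ha)
  have hY_bdd : ∀ᵐ ω ∂μ, |∑ a ∈ s, q a ω * zh a ω| ≤ η⁻¹ := by
    filter_upwards [(Filter.eventually_all_finset s).2 hbdd] with ω hω
    exact abs_sum_mul_le_of_abs_le (hq0 ω) (hq1 ω) hω
  have hYM : μ[fun ω => ∑ a ∈ s, q a ω * zh a ω|m] =ᵐ[μ] fun ω => ∑ a ∈ s, q a ω * z a ω := by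
    filter_upwards [condExp_sum_mul_of_stronglyMeasurable hm hq hq0 hq1
      (fun a ha => Integrable.of_bound (hzh a ha) _ (hbdd a ha)),
      (Filter.eventually_all_finset s).2 hmean] with ω h1 h2
    rw [h1]
    exact sum_congr rfl fun a ha => by rw [h2 a ha]
  have hYB : μ[fun ω => (∑ a ∈ s, q a ω * zh a ω) ^ 2|m] ≤ᵐ[μ]
      fun ω => η⁻¹ * ∑ a ∈ s, q a ω * b a ω := by
    filter_upwards [condExp_sq_sum_mul_le hm hq hq0 hq1 hzh
      (fun a ha => integrable_sq_of_ae_abs_le (hzh a ha) (hbdd a ha)),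
      (Filter.eventually_all_finset s).2 hvar] with ω h1 h2
    refine h1.trans ((sum_le_sum fun a ha => mul_le_mul_of_nonneg_left
      ((le_inv_mul_iff₀ hη).2 (h2 a ha)) (hq0 ω a ha)).trans_eq ?_)
    simp only [mul_sum, mul_left_comm]
  have key := condExp_exp_sub_le_one hm (θ := -(6 / 7 * η)) (c := 7 / 10)
    (M := fun ω => ∑ a ∈ s, q a ω * z a ω) (B := fun ω => η⁻¹ * ∑ a ∈ s, q a ω * b a ω)
    (by norm_num) (Integrable.of_bound hY _ hY_bdd) (integrable_sq_of_ae_abs_le hY hY_bdd)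
    (hY_bdd.mono fun ω hω => exp_le_one_add_add_seven_tenths_sq (by
      rw [abs_mul, abs_neg, abs_of_pos (by positivity)]
      calc 6 / 7 * η * |∑ a ∈ s, q a ω * zh a ω| ≤ 6 / 7 * η * η⁻¹ :=
            mul_le_mul_of_nonneg_left hω (by positivity)
        _ = 6 / 7 := by field_simp))
    (Finset.stronglyMeasurable_fun_sum s fun a ha => (hq a ha).mul (hz a ha))
    ((Finset.stronglyMeasurable_fun_sum s fun a ha => (hq a ha).mul (hb a ha)).const_mul η⁻¹)
    hYM hYB
  convert key using 4 with ω
  simp only [mul_sub, sum_sub_distrib]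
  field_simp
  ring

end Weighted

end CondExp

section Chernoff

variable {Ω : Type*} {mΩ : MeasurableSpace Ω} {μ : Measure Ω} [IsProbabilityMeasure μ]
  {G : ℕ → Ω → ℝ} {C : ℝ}

theorem integrable_exp_sum_of_le {n : ℕ} (hG : ∀ t ∈ Icc 1 n, AEStronglyMeasurable (G t) μ)
    (hGC : ∀ t ∈ Icc 1 n, ∀ᵐ ω ∂μ, G t ω ≤ C) :
    Integrable (fun ω => exp (∑ t ∈ Icc 1 n, G t ω)) μ := by
  refine Integrable.of_bound (continuous_exp.comp_aestronglyMeasurable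
    (Finset.aestronglyMeasurable_fun_sum _ hG)) (exp (∑ t ∈ Icc 1 n, C)) ?_
  filter_upwards [(Filter.eventually_all_finset _).2 hGC] with ω hω
  rw [norm_of_nonneg (exp_pos _).le]
  exact exp_le_exp.2 (sum_le_sum hω)

theorem integral_exp_sum_le_one (ℱ : Filtration ℕ mΩ) {n : ℕ}
    (hG : ∀ t ∈ Icc 1 n, StronglyMeasurable[ℱ t] (G t))
    (hGC : ∀ t ∈ Icc 1 n, ∀ᵐ ω ∂μ, G t ω ≤ C)
    (hcond : ∀ t ∈ Icc 1 n, μ[fun ω => exp (G t ω)|ℱ (t - 1)] ≤ᵐ[μ] 1) :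
    ∫ ω, exp (∑ t ∈ Icc 1 n, G t ω) ∂μ ≤ 1 := by
  induction n with
  | zero => simp
  | succ n ih =>
    have hsub : Icc 1 n ⊆ Icc 1 (n + 1) := Icc_subset_Icc_right (Nat.le_succ n)
    have hlast : n + 1 ∈ Icc 1 (n + 1) := right_mem_Icc.2 (Nat.le_add_left 1 n)
    have hGae : ∀ t ∈ Icc 1 (n + 1), AEStronglyMeasurable (G t) μ := fun t ht =>
      ((hG t ht).mono (ℱ.le t)).aestronglyMeasurable
    set F : Ω → ℝ := fun ω => exp (∑ t ∈ Icc 1 n, G t ω)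
    set g : Ω → ℝ := fun ω => exp (G (n + 1) ω)
    have hFg : (fun ω => exp (∑ t ∈ Icc 1 (n + 1), G t ω)) = F * g := by
      funext ω
      simp only [F, g, Pi.mul_apply, sum_Icc_succ_top (Nat.le_add_left 1 n), exp_add]
    have hF : StronglyMeasurable[ℱ n] F :=
      continuous_exp.comp_stronglyMeasurable (Finset.stronglyMeasurable_fun_sum _ fun t ht =>
        (hG t (hsub ht)).mono (ℱ.mono (mem_Icc.1 ht).2))
    have hFg_int : Integrable (F * g) μ := hFg ▸ integrable_exp_sum_of_le hGae hGC
    have hg_int : Integrable g μ := by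
      simpa using integrable_exp_sum_of_le (n := 1) (G := fun _ => G (n + 1)) (C := C)
        (fun _ _ => hGae _ hlast) (fun _ _ => hGC _ hlast)
    -- tower property: `E[F g] = E[F E[g | ℱ n]] ≤ E[F]`
    have hle : μ[F * g|ℱ n] ≤ᵐ[μ] F := by
      have h := hcond (n + 1) hlast
      rw [Nat.add_sub_cancel] at h
      filter_upwards [condExp_mul_of_stronglyMeasurable_left hF hFg_int hg_int, h] with ω h1 h2
      rw [h1, Pi.mul_apply]
      exact mul_le_of_le_one_right (exp_pos _).le h2
    rw [hFg, ← integral_condExp (ℱ.le n)]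
    exact (integral_mono_ae integrable_condExp (integrable_exp_sum_of_le
      (fun t ht => hGae t (hsub ht)) fun t ht => hGC t (hsub ht)) hle).trans
      (ih (fun t ht => hG t (hsub ht)) (fun t ht => hGC t (hsub ht)) fun t ht => hcond t (hsub ht))

theorem measure_lt_sum_le_exp_neg (ℱ : Filtration ℕ mΩ) {n : ℕ}
    (hG : ∀ t ∈ Icc 1 n, StronglyMeasurable[ℱ t] (G t))
    (hGC : ∀ t ∈ Icc 1 n, ∀ᵐ ω ∂μ, G t ω ≤ C)
    (hcond : ∀ t ∈ Icc 1 n, μ[fun ω => exp (G t ω)|ℱ (t - 1)] ≤ᵐ[μ] 1) (x : ℝ) :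
    μ {ω | x < ∑ t ∈ Icc 1 n, G t ω} ≤ ENNReal.ofReal (exp (-x)) := by
  have hmarkov := mul_meas_ge_le_integral_of_nonneg (ae_of_all μ fun ω => (exp_pos _).le)
    (integrable_exp_sum_of_le (fun t ht => ((hG t ht).mono (ℱ.le t)).aestronglyMeasurable) hGC)
    (exp x)
  have hsub : {ω | x < ∑ t ∈ Icc 1 n, G t ω} ⊆ {ω | exp x ≤ exp (∑ t ∈ Icc 1 n, G t ω)} :=
    fun ω hω => exp_le_exp.2 (le_of_lt hω)
  rw [← ofReal_measureReal]
  refine ENNReal.ofReal_le_ofReal ((measureReal_mono hsub).trans ?_)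
  rw [exp_neg, ← one_div, le_div_iff₀ (exp_pos x), mul_comm]
  exact hmarkov.trans (integral_exp_sum_le_one ℱ hG hGC hcond)

end Chernoff

section Deviations

variable {Ω : Type*} {mΩ : MeasurableSpace Ω} {μ : Measure Ω} [IsProbabilityMeasure μ]
  (ℱ : Filtration ℕ mΩ) {n : ℕ} {η : ℝ}

theorem measure_lt_sum_deviation_le (hη : 0 < η) {zh z b : ℕ → Ω → ℝ}
    (hzh : ∀ t ∈ Icc 1 n, StronglyMeasurable[ℱ t] (zh t))
    (hz : ∀ t ∈ Icc 1 n, StronglyMeasurable[ℱ (t - 1)] (z t))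
    (hb : ∀ t ∈ Icc 1 n, StronglyMeasurable[ℱ (t - 1)] (b t))
    (habs : ∀ᵐ ω ∂μ, ∀ t ∈ Icc 1 n, η * |zh t ω| ≤ 1)
    (hvar : ∀ t ∈ Icc 1 n, ∀ᵐ ω ∂μ, η * μ[fun ω' => zh t ω' ^ 2|ℱ (t - 1)] ω ≤ b t ω)
    (hmean : ∀ t ∈ Icc 1 n, μ[zh t|ℱ (t - 1)] =ᵐ[μ] z t) (x : ℝ) :
    μ {ω | x < ∑ t ∈ Icc 1 n, 6 / 5 * η * (zh t ω - z t ω - b t ω)} ≤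
      ENNReal.ofReal (exp (-x)) := by
  have habs' : ∀ t ∈ Icc 1 n, ∀ᵐ ω ∂μ, η * |zh t ω| ≤ 1 := fun t ht =>
    habs.mono fun ω h => h t ht
  refine measure_lt_sum_le_exp_neg ℱ (C := 12 / 5) (fun t ht => ?_) (fun t ht => ?_)
    (fun t ht => condExp_exp_deviation_le_one (ℱ.le _) hη
      ((hzh t ht).mono (ℱ.le t)).aestronglyMeasurable (hz t ht) (hb t ht) (habs' t ht)
      (hvar t ht) (hmean t ht)) x
  · exact ((hzh t ht).sub ((hz t ht).mono (ℱ.mono (Nat.sub_le t 1)))).sub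
      ((hb t ht).mono (ℱ.mono (Nat.sub_le t 1))) |>.const_mul _
  · filter_upwards [ae_abs_le_inv_of_mul_abs_le_one hη (habs' t ht),
      ae_abs_le_inv_of_condExp_eq hη (habs' t ht) (hmean t ht),
      ae_nonneg_of_mul_condExp_sq_le hη.le (hvar t ht)] with ω h1 h2 h3
    have h4 : zh t ω - z t ω - b t ω ≤ 2 * η⁻¹ := by
      linarith [le_abs_self (zh t ω), neg_abs_le (z t ω), h3]
    calc 6 / 5 * η * (zh t ω - z t ω - b t ω) ≤ 6 / 5 * η * (2 * η⁻¹) :=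
          mul_le_mul_of_nonneg_left h4 (by positivity)
      _ = 12 / 5 := by field_simp; norm_num

theorem measure_lt_sum_weighted_deviation_le (hη : 0 < η) {ι : Type*} {s : Finset ι}
    {q zh z b : ℕ → ι → Ω → ℝ}
    (hq : ∀ t ∈ Icc 1 n, ∀ a ∈ s, StronglyMeasurable[ℱ (t - 1)] (q t a))
    (hq0 : ∀ t ω, ∀ a ∈ s, 0 ≤ q t a ω) (hq1 : ∀ t ω, ∑ a ∈ s, q t a ω = 1)
    (hzh : ∀ t ∈ Icc 1 n, ∀ a ∈ s, StronglyMeasurable[ℱ t] (zh t a))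
    (hz : ∀ t ∈ Icc 1 n, ∀ a ∈ s, StronglyMeasurable[ℱ (t - 1)] (z t a))
    (hb : ∀ t ∈ Icc 1 n, ∀ a ∈ s, StronglyMeasurable[ℱ (t - 1)] (b t a))
    (habs : ∀ᵐ ω ∂μ, ∀ t ∈ Icc 1 n, ∀ a ∈ s, η * |zh t a ω| ≤ 1)
    (hvar : ∀ t ∈ Icc 1 n, ∀ a ∈ s,
      ∀ᵐ ω ∂μ, η * μ[fun ω' => zh t a ω' ^ 2|ℱ (t - 1)] ω ≤ b t a ω)
    (hmean : ∀ t ∈ Icc 1 n, ∀ a ∈ s, μ[zh t a|ℱ (t - 1)] =ᵐ[μ] z t a) (x : ℝ) :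
    μ {ω | x < ∑ t ∈ Icc 1 n, 6 / 7 * η *
      (∑ a ∈ s, q t a ω * (z t a ω - zh t a ω) - 3 / 5 * ∑ a ∈ s, q t a ω * b t a ω)} ≤
      ENNReal.ofReal (exp (-x)) := by
  have habs' : ∀ t ∈ Icc 1 n, ∀ a ∈ s, ∀ᵐ ω ∂μ, η * |zh t a ω| ≤ 1 := fun t ht a ha =>
    habs.mono fun ω h => h t ht a ha
  refine measure_lt_sum_le_exp_neg ℱ (C := 12 / 7) (fun t ht => ?_) (fun t ht => ?_)
    (fun t ht => condExp_exp_weighted_deviation_le_one (ℱ.le _) hη (hq t ht) (hq0 t) (hq1 t)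
      (fun a ha => ((hzh t ht a ha).mono (ℱ.le t)).aestronglyMeasurable) (hz t ht) (hb t ht)
      (habs' t ht) (hvar t ht) (hmean t ht)) x
  · have hpred : ∀ {f : Ω → ℝ}, StronglyMeasurable[ℱ (t - 1)] f → StronglyMeasurable[ℱ t] f :=
      fun hf => hf.mono (ℱ.mono (Nat.sub_le t 1))
    refine ((StronglyMeasurable.sub ?_ ?_).const_mul _)
    rotate_left
    · exact (Finset.stronglyMeasurable_fun_sum s fun a ha =>
        (hpred (hq t ht a ha)).mul (hpred (hb t ht a ha))).const_mul _
    · exact Finset.stronglyMeasurable_fun_sum s fun a ha =>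
        (hpred (hq t ht a ha)).mul ((hpred (hz t ht a ha)).sub (hzh t ht a ha))
  · filter_upwards [(Filter.eventually_all_finset s).2 fun a ha =>
        ae_abs_le_inv_of_mul_abs_le_one hη (habs' t ht a ha),
      (Filter.eventually_all_finset s).2 fun a ha =>
        ae_abs_le_inv_of_condExp_eq hη (habs' t ht a ha) (hmean t ht a ha),
      (Filter.eventually_all_finset s).2 fun a ha =>
        ae_nonneg_of_mul_condExp_sq_le hη.le (hvar t ht a ha)] with ω h1 h2 h3
    have h4 : ∑ a ∈ s, q t a ω * (z t a ω - zh t a ω) - 3 / 5 * ∑ a ∈ s, q t a ω * b t a ω ≤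
        2 * η⁻¹ := by
      have hzz := abs_sum_mul_le_of_abs_le (hq0 t ω) (hq1 t ω) fun a ha =>
        (abs_sub _ _).trans (add_le_add (h2 a ha) (h1 a ha))
      have hqb := sum_nonneg fun a ha => mul_nonneg (hq0 t ω a ha) (h3 a ha)
      linarith [le_abs_self (∑ a ∈ s, q t a ω * (z t a ω - zh t a ω))]
    calc _ ≤ 6 / 7 * η * (2 * η⁻¹) := mul_le_mul_of_nonneg_left h4 (by positivity)
      _ = 12 / 7 := by field_simp; norm_num

end Deviations

section Union

variable {Ω : Type*} {mΩ : MeasurableSpace Ω} {μ : Measure Ω} [IsProbabilityMeasure μ]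

theorem one_sub_card_add_one_mul_le_measure {ι : Type*} {s : Finset ι} {E₀ S : Set Ω}
    {E : ι → Set Ω} {δ : ℝ} (hδ : 0 ≤ δ) (hE₀ : μ E₀ ≤ ENNReal.ofReal δ)
    (hE : ∀ i ∈ s, μ (E i) ≤ ENNReal.ofReal δ)
    (hS : ∀ᵐ ω ∂μ, ω ∉ E₀ → (∀ i ∈ s, ω ∉ E i) → ω ∈ S) :
    1 - (#s + 1) * δ ≤ (μ S).toReal := by
  have hcompl : μ Sᶜ ≤ ENNReal.ofReal ((#s + 1) * δ) := by
    have hsub : Sᶜ ≤ᵐ[μ] (E₀ ∪ ⋃ i ∈ s, E i : Set Ω) := by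
      filter_upwards [hS] with ω h (hω : ω ∉ S)
      show ω ∈ E₀ ∪ ⋃ i ∈ s, E i
      simp only [Set.mem_union, Set.mem_iUnion, exists_prop]
      by_contra hc
      exact hω (h (fun h₀ => hc (Or.inl h₀)) fun i hi hi' => hc (Or.inr ⟨i, hi, hi'⟩))
    calc μ Sᶜ ≤ μ E₀ + ∑ i ∈ s, μ (E i) := (measure_mono_ae hsub).trans
          ((measure_union_le _ _).trans (add_le_add_right (measure_biUnion_finset_le s E) _))
      _ ≤ ENNReal.ofReal δ + ∑ i ∈ s, ENNReal.ofReal δ := add_le_add hE₀ (sum_le_sum hE)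
      _ = ENNReal.ofReal ((#s + 1) * δ) := by
        rw [sum_const, nsmul_eq_mul, ENNReal.ofReal_mul (by positivity), ENNReal.ofReal_add
          (Nat.cast_nonneg _) zero_le_one, ENNReal.ofReal_natCast, ENNReal.ofReal_one]
        ring
  have hcover : 1 ≤ (μ S).toReal + (μ Sᶜ).toReal := by
    have := measureReal_union_le (μ := μ) S Sᶜ
    rwa [Set.union_compl_self, probReal_univ] at this
  linarith [ENNReal.toReal_le_of_le_ofReal (by positivity) hcompl]

end Union

theorem regret_le_of_deviation_bounds {ι : Type*} {s : Finset ι} {q z zh b : ℕ → ι → ℝ} {n : ℕ}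
    {η L : ℝ} {a : ι} (hη : 0 < η) (hq1 : ∀ t, ∑ c ∈ s, q t c = 1)
    (hreg : -η * ∑ t ∈ Icc 1 n, (zh t a - b t a) - log #s ≤
      ∑ t ∈ Icc 1 n, ∑ c ∈ s, q t c * (-(η * zh t c) + (η * zh t c) ^ 2 + 22 / 5 * (η * b t c)))
    (hdev : ∑ t ∈ Icc 1 n, 6 / 5 * η * (zh t a - z t a - b t a) ≤ L)
    (hweighted : ∑ t ∈ Icc 1 n, 6 / 7 * η *
      (∑ c ∈ s, q t c * (z t c - zh t c) - 3 / 5 * ∑ c ∈ s, q t c * b t c) ≤ L)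
    (hcard : log #s ≤ L) :
    ∑ t ∈ Icc 1 n, ∑ c ∈ s, q t c * (z t c - z t a) ≤
      3 * L / η + η * ∑ t ∈ Icc 1 n, ∑ c ∈ s, q t c * zh t c ^ 2
        + 5 * ∑ t ∈ Icc 1 n, ∑ c ∈ s, q t c * b t c := by
  have hmix : ∀ t, ∑ c ∈ s, q t c * (z t c - z t a) = ∑ c ∈ s, q t c * z t c - z t a := fun t => by
    simp only [mul_sub, sum_sub_distrib, ← sum_mul, hq1, one_mul]
  rw [sum_congr rfl fun t _ => hmix t, sum_sub_distrib]
  simp only [mul_sub, mul_add, sum_sub_distrib, sum_add_distrib, ← mul_sum, mul_pow,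
    mul_left_comm (q _ _), mul_neg, sum_neg_distrib] at hreg hdev hweighted
  rw [← mul_le_mul_iff_of_pos_left hη, mul_add, mul_add, mul_div_cancel₀ _ hη.ne']
  linarith

theorem stmt7_general
    {Ω : Type*} {mΩ : MeasurableSpace Ω} {μ : Measure Ω} [IsProbabilityMeasure μ]
    (n K : ℕ) (ℱ : Filtration ℕ mΩ)
    (𝒜 : Finset (Fin K)) (h𝒜 : 𝒜.Nonempty)
    (η : ℝ) (hη : 0 < η)
    (Z Zhat β : ℕ → Fin K → Ω → ℝ)
    (hZpred : ∀ t ∈ Icc 1 n, ∀ a : Fin K, StronglyMeasurable[ℱ (t - 1)] (Z t a))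
    (hZhatadapt : ∀ t ∈ Icc 1 n, ∀ a : Fin K, StronglyMeasurable[ℱ t] (Zhat t a))
    (hβpred : ∀ t ∈ Icc 1 n, ∀ a : Fin K, StronglyMeasurable[ℱ (t - 1)] (β t a))
    (ha : ∀ᵐ ω ∂μ, ∀ t ∈ Icc 1 n, ∀ a ∈ 𝒜, η * |Zhat t a ω| ≤ 1)
    (hb : ∀ᵐ ω ∂μ, ∀ t ∈ Icc 1 n, ∀ a ∈ 𝒜, η * β t a ω ≤ 1)
    (hc : ∀ t ∈ Icc 1 n, ∀ a ∈ 𝒜,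
      ∀ᵐ ω ∂μ, η * (μ[fun ω' => (Zhat t a ω') ^ 2|ℱ (t - 1)]) ω ≤ β t a ω)
    (hd : ∀ t ∈ Icc 1 n, ∀ a ∈ 𝒜, (μ[Zhat t a|ℱ (t - 1)]) =ᵐ[μ] Z t a)
    (Q : ℕ → Fin K → Ω → ℝ)
    (hQ : ∀ t a ω, Q t a ω =
      (if a ∈ 𝒜 then Real.exp (-η * ∑ s ∈ Icc 1 (t - 1), (Zhat s a ω - β s a ω)) else 0) /
        ∑ b ∈ 𝒜, Real.exp (-η * ∑ s ∈ Icc 1 (t - 1), (Zhat s b ω - β s b ω)))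
    (Astar : Ω → Fin K)
    (hAstar : ∀ ω, Astar ω ∈ 𝒜 ∧ ∀ b ∈ 𝒜,
      ∑ t ∈ Icc 1 n, Z t (Astar ω) ω ≤ ∑ t ∈ Icc 1 n, Z t b ω)
    (δ : ℝ) (hδ0 : 0 < δ) (hδ1 : δ ≤ 1 / (K + 1)) :
    1 - (K + 1) * δ ≤
      (μ {ω | ∑ t ∈ Icc 1 n, ∑ a ∈ 𝒜, Q t a ω * (Z t a ω - Z t (Astar ω) ω) ≤
        3 * Real.log (1 / δ) / η
          + η * ∑ t ∈ Icc 1 n, ∑ a ∈ 𝒜, Q t a ω * (Zhat t a ω) ^ 2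
          + 5 * ∑ t ∈ Icc 1 n, ∑ a ∈ 𝒜, Q t a ω * β t a ω}).toReal := by
  obtain rfl : Q = fun t a ω => expWeights 𝒜 η (fun s b => Zhat s b ω - β s b ω) t a :=
    funext fun t => funext fun a => funext (hQ t a)
  have hcard : (#𝒜 : ℝ) ≤ K := by exact_mod_cast (card_le_univ 𝒜).trans (Fintype.card_fin K).le
  have hKδ : (K + 1 : ℝ) * δ ≤ 1 := by rwa [le_div_iff₀ (by positivity), mul_comm] at hδ1
  have hlog : log #𝒜 ≤ log (1 / δ) :=
    log_le_log (by exact_mod_cast h𝒜.card_pos) (by rw [le_div_iff₀ hδ0]; nlinarith)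
  have hexp : ENNReal.ofReal (exp (-log (1 / δ))) = ENNReal.ofReal δ := by
    rw [exp_neg, exp_log (by positivity), one_div, inv_inv]
  have hdev := fun a (ha' : a ∈ 𝒜) => measure_lt_sum_deviation_le ℱ hη
    (fun t ht => hZhatadapt t ht a) (fun t ht => hZpred t ht a) (fun t ht => hβpred t ht a)
    (ha.mono fun ω h t ht => h t ht a ha') (fun t ht => hc t ht a ha') (fun t ht => hd t ht a ha')
    (log (1 / δ))
  have hQpred : ∀ t ∈ Icc 1 n, ∀ a ∈ 𝒜, StronglyMeasurable[ℱ (t - 1)]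
      fun ω => expWeights 𝒜 η (fun s b => Zhat s b ω - β s b ω) t a := fun t ht a _ =>
    stronglyMeasurable_expWeights ℱ (fun s hs b => (hZhatadapt s hs b).sub
      ((hβpred s hs b).mono (ℱ.mono (Nat.sub_le s 1)))) ht a
  have hweighted := measure_lt_sum_weighted_deviation_le ℱ hη hQpred
    (fun t ω a _ => expWeights_nonneg t a) (fun t ω => sum_expWeights h𝒜 t)
    (fun t ht a _ => hZhatadapt t ht a) (fun t ht a _ => hZpred t ht a)
    (fun t ht a _ => hβpred t ht a) ha hc hd (log (1 / δ))
  have hβ0 : ∀ᵐ ω ∂μ, ∀ t ∈ Icc 1 n, ∀ a ∈ 𝒜, 0 ≤ β t a ω :=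
    (Filter.eventually_all_finset _).2 fun t ht => (Filter.eventually_all_finset _).2 fun a ha' =>
      ae_nonneg_of_mul_condExp_sq_le hη.le (hc t ht a ha')
  rw [hexp] at hdev hweighted
  refine le_trans ?_ (one_sub_card_add_one_mul_le_measure hδ0.le hweighted hdev ?_)
  · nlinarith
  filter_upwards [ha, hb, hβ0] with ω h1 h2 h3 hweighted' hdev'
  exact regret_le_of_deviation_bounds hη (sum_expWeights h𝒜)
    (expWeights_regret hη.le h1 (fun t ht a ha' => ⟨h3 t ht a ha', h2 t ht a ha'⟩) (hAstar ω).1)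
    (not_lt.1 (hdev' _ (hAstar ω).1)) (not_lt.1 hweighted') hlog

theorem stmt7
    {Ω : Type*} {mΩ : MeasurableSpace Ω} {μ : Measure Ω} [IsProbabilityMeasure μ]
    (n K : ℕ) (ℱ : Filtration ℕ mΩ)
    (𝒜 : Finset (Fin K)) (h𝒜 : 𝒜.Nonempty)
    (η : ℝ) (hη : 0 < η)
    (Z Zhat β : ℕ → Fin K → Ω → ℝ)
    (hZpred : ∀ t ∈ Icc 1 n, ∀ a : Fin K, StronglyMeasurable[ℱ (t - 1)] (Z t a))
    (hZhatadapt : ∀ t ∈ Icc 1 n, ∀ a : Fin K, StronglyMeasurable[ℱ t] (Zhat t a))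
    (hβpred : ∀ t ∈ Icc 1 n, ∀ a : Fin K, StronglyMeasurable[ℱ (t - 1)] (β t a))
    (ha : ∀ᵐ ω ∂μ, ∀ t ∈ Icc 1 n, ∀ a ∈ 𝒜, η * |Zhat t a ω| ≤ 1)
    (hb : ∀ᵐ ω ∂μ, ∀ t ∈ Icc 1 n, ∀ a ∈ 𝒜, η * β t a ω ≤ 1)
    (hc : ∀ t ∈ Icc 1 n, ∀ a ∈ 𝒜,
      ∀ᵐ ω ∂μ, η * (μ[fun ω' => (Zhat t a ω') ^ 2|ℱ (t - 1)]) ω ≤ β t a ω)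
    (hd : ∀ t ∈ Icc 1 n, ∀ a ∈ 𝒜, (μ[Zhat t a|ℱ (t - 1)]) =ᵐ[μ] Z t a)
    (Q : ℕ → Fin K → Ω → ℝ)
    (hQ : ∀ t a ω, Q t a ω =
      (if a ∈ 𝒜 then Real.exp (-η * ∑ s ∈ Icc 1 (t - 1), (Zhat s a ω - β s a ω)) else 0) /
        ∑ b ∈ 𝒜, Real.exp (-η * ∑ s ∈ Icc 1 (t - 1), (Zhat s b ω - β s b ω)))
    (Astar : Ω → Fin K) (hAstarMeas : Measurable Astar)
    (hAstar : ∀ ω, Astar ω ∈ 𝒜 ∧ ∀ b ∈ 𝒜,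
      ∑ t ∈ Icc 1 n, Z t (Astar ω) ω ≤ ∑ t ∈ Icc 1 n, Z t b ω)
    (δ : ℝ) (hδ0 : 0 < δ) (hδ1 : δ ≤ 1 / (K + 1)) :
    1 - (K + 1) * δ ≤
      (μ {ω | ∑ t ∈ Icc 1 n, ∑ a ∈ 𝒜, Q t a ω * (Z t a ω - Z t (Astar ω) ω) ≤
        3 * Real.log (1 / δ) / η
          + η * ∑ t ∈ Icc 1 n, ∑ a ∈ 𝒜, Q t a ω * (Zhat t a ω) ^ 2
          + 5 * ∑ t ∈ Icc 1 n, ∑ a ∈ 𝒜, Q t a ω * β t a ω}).toReal :=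
  stmt7_general n K ℱ 𝒜 h𝒜 η hη Z Zhat β hZpred hZhatadapt hβpred ha hb hc hd Q hQ Astar hAstar δ
    hδ0 hδ1
end

section
/- Let X be a square-integrable real random variable and η > 0 be such that η·X ≤ 1 almost surely. Let μ = E[X] and σ² = E[X²]. Then E[ exp( η·(X − μ − η·σ²) ) ] ≤ 1. -/
/-!
Pointwise, `exp y ≤ 1 + y + y²` for `y ≤ 1`; integrating this with `y = η X` and then using
`1 + t ≤ exp t` gives `E[exp (η X)] ≤ exp (η E[X] + η² E[X²])`.
-/

open MeasureTheory

theorem Real.exp_le_one_add_add_sq {x : ℝ} (hx : x ≤ 1) : Real.exp x ≤ 1 + x + x ^ 2 := by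
  rcases le_or_gt x (-1) with hx' | hx'
  · have : Real.exp x ≤ 1 := Real.exp_le_one_iff.mpr (by linarith)
    nlinarith
  · have h := Real.abs_exp_sub_one_sub_id_le (abs_le.mpr ⟨hx'.le, hx⟩)
    linarith [le_abs_self (Real.exp x - 1 - x)]

section

variable {Ω : Type*} {mΩ : MeasurableSpace Ω} {μ : Measure Ω} [IsProbabilityMeasure μ]
  {Y : Ω → ℝ}

theorem integral_exp_le_one_add_integral_add_integral_sq (hY : AEStronglyMeasurable Y μ)
    (hY2 : Integrable (fun ω => Y ω ^ 2) μ) (hbd : ∀ᵐ ω ∂μ, Y ω ≤ 1) :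
    ∫ ω, Real.exp (Y ω) ∂μ ≤ 1 + ∫ ω, Y ω ∂μ + ∫ ω, Y ω ^ 2 ∂μ := by
  have hY1 : Integrable Y μ := ((memLp_two_iff_integrable_sq hY).mpr hY2).integrable one_le_two
  have hquad : Integrable (fun ω => 1 + Y ω + Y ω ^ 2) μ :=
    ((integrable_const 1).add hY1).add hY2
  have hpointwise : ∀ᵐ ω ∂μ, Real.exp (Y ω) ≤ 1 + Y ω + Y ω ^ 2 :=
    hbd.mono fun ω => Real.exp_le_one_add_add_sq
  have hexp : Integrable (fun ω => Real.exp (Y ω)) μ := by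
    refine hquad.mono' (Real.continuous_exp.comp_aestronglyMeasurable hY) ?_
    filter_upwards [hpointwise] with ω hω
    rwa [Real.norm_of_nonneg (Real.exp_pos _).le]
  calc ∫ ω, Real.exp (Y ω) ∂μ ≤ ∫ ω, (1 + Y ω + Y ω ^ 2) ∂μ :=
        integral_mono_ae hexp hquad hpointwise
    _ = 1 + ∫ ω, Y ω ∂μ + ∫ ω, Y ω ^ 2 ∂μ := by
        rw [integral_add (f := fun ω => 1 + Y ω) ((integrable_const 1).add hY1) hY2,
          integral_add (integrable_const 1) hY1, integral_const, probReal_univ, one_smul]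

theorem integral_exp_sub_integral_sub_integral_sq_le_one (hY : AEStronglyMeasurable Y μ)
    (hY2 : Integrable (fun ω => Y ω ^ 2) μ) (hbd : ∀ᵐ ω ∂μ, Y ω ≤ 1) :
    ∫ ω, Real.exp (Y ω - ∫ ω', Y ω' ∂μ - ∫ ω', Y ω' ^ 2 ∂μ) ∂μ ≤ 1 := by
  set c := ∫ ω', Y ω' ∂μ + ∫ ω', Y ω' ^ 2 ∂μ with hc
  have hsplit : ∀ ω, Real.exp (Y ω - ∫ ω', Y ω' ∂μ - ∫ ω', Y ω' ^ 2 ∂μ)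
      = Real.exp (Y ω) * Real.exp (-c) := fun ω => by
    rw [← Real.exp_add, hc]; congr 1; ring
  calc ∫ ω, Real.exp (Y ω - ∫ ω', Y ω' ∂μ - ∫ ω', Y ω' ^ 2 ∂μ) ∂μ
      = (∫ ω, Real.exp (Y ω) ∂μ) * Real.exp (-c) := by
        simp only [hsplit, integral_mul_const]
    _ ≤ Real.exp c * Real.exp (-c) := by
        gcongr
        linarith [integral_exp_le_one_add_integral_add_integral_sq hY hY2 hbd,
          Real.add_one_le_exp c]
    _ = 1 := by rw [← Real.exp_add, add_neg_cancel, Real.exp_zero]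

end

theorem stmt9_general
    {Ω : Type*} {mΩ : MeasurableSpace Ω} (μ : Measure Ω) [IsProbabilityMeasure μ]
    (X : Ω → ℝ) (hXmeas : Measurable X)
    (hL2 : Integrable (fun ω => (X ω) ^ 2) μ)
    (η : ℝ)
    (hbd : ∀ᵐ ω ∂μ, η * X ω ≤ 1) :
    ∫ ω, Real.exp (η * (X ω - (∫ ω', X ω' ∂μ) - η * ∫ ω', (X ω') ^ 2 ∂μ)) ∂μ ≤ 1 := by
  have hsq : (fun ω => (η * X ω) ^ 2) = fun ω => η ^ 2 * X ω ^ 2 := by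
    funext ω; ring
  have h := integral_exp_sub_integral_sub_integral_sq_le_one
    (hXmeas.const_mul η).aestronglyMeasurable (by rw [hsq]; exact hL2.const_mul _) hbd
  rw [hsq, integral_const_mul, integral_const_mul] at h
  convert h using 4 with ω
  ring

theorem stmt9
    {Ω : Type*} {mΩ : MeasurableSpace Ω} (μ : Measure Ω) [IsProbabilityMeasure μ]
    (X : Ω → ℝ) (hXmeas : Measurable X)
    (hL2 : Integrable (fun ω => (X ω) ^ 2) μ)
    (η : ℝ) (hη : 0 < η)
    (hbd : ∀ᵐ ω ∂μ, η * X ω ≤ 1) :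
    ∫ ω, Real.exp (η * (X ω - (∫ ω', X ω' ∂μ) - η * ∫ ω', (X ω') ^ 2 ∂μ)) ∂μ ≤ 1 :=
  stmt9_general (mΩ := mΩ) μ X hXmeas hL2 η hbd
end

section
/- Let a ≥ 0 and b ≥ 1 be real constants and let X, Y be integrable real random variables on a common probability space such that P( X ≥ Y + √(a·log(b/δ)) ) ≤ δ for all δ ∈ (0,1). Then E[X] ≤ E[Y] + √(a·(1 + log b)). -/
/-!
Put `W = max (X - Y) 0`. Choosing `δ = b e^{-u/a}` in the hypothesis gives the sub-exponential
tail `P(W² > u) ≤ b e^{-u/a}` for `u > a log b`, so by the layer-cake formula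
`E[W²] ≤ a log b + ∫_{a log b}^∞ b e^{-u/a} du = a (1 + log b)`. Jensen's inequality then gives
`E[X] - E[Y] ≤ E[W] ≤ √(E[W²])`. When `a = 0` the hypothesis forces `X ≤ Y` almost surely.
-/

open MeasureTheory

section

open Set Real ENNReal Filter Topology

lemma measure_eq_zero_of_forall_le_ofReal {Ω : Type*} {mΩ : MeasurableSpace Ω} {μ : Measure Ω}
    {s : Set Ω} (h : ∀ δ ∈ Ioo (0 : ℝ) 1, μ s ≤ ENNReal.ofReal δ) : μ s = 0 := by
  have hlim : Tendsto (fun δ : ℝ => ENNReal.ofReal δ) (𝓝[>] 0) (𝓝 0) := by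
    simpa using (ENNReal.tendsto_ofReal (tendsto_id (x := 𝓝 (0:ℝ)))).mono_left nhdsWithin_le_nhds
  exact nonpos_iff_eq_zero.1 <| ge_of_tendsto hlim <|
    eventually_of_mem (Ioo_mem_nhdsGT one_pos) h

lemma lintegral_Ioi_exp_neg_div {a : ℝ} (ha : 0 < a) (c : ℝ) :
    ∫⁻ u in Ioi c, ENNReal.ofReal (exp (-u / a)) = ENNReal.ofReal (a * exp (-c / a)) := by
  have hrate : -a⁻¹ < 0 := neg_neg_of_pos (inv_pos.2 ha)
  have hform : ∀ u, -u / a = -a⁻¹ * u := fun u => by ring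
  simp_rw [hform]
  rw [← ofReal_integral_eq_lintegral_ofReal (integrableOn_exp_mul_Ioi hrate c)
    (Eventually.of_forall fun _ => (exp_pos _).le), integral_exp_mul_Ioi hrate]
  congr 1
  field_simp

lemma lintegral_le_of_measure_lt_le_exp {Ω : Type*} {mΩ : MeasurableSpace Ω} {μ : Measure Ω}
    [IsProbabilityMeasure μ] {f : Ω → ℝ} (hf_nn : 0 ≤ᵐ[μ] f) (hf : AEMeasurable f μ)
    {a b : ℝ} (ha : 0 < a) (hb : 1 ≤ b)
    (htail : ∀ u, a * log b < u → μ {ω | u < f ω} ≤ ENNReal.ofReal (b * exp (-u / a))) :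
    ∫⁻ ω, ENNReal.ofReal (f ω) ∂μ ≤ ENNReal.ofReal (a * (1 + log b)) := by
  have hu₀ : 0 ≤ a * log b := mul_nonneg ha.le (log_nonneg hb)
  have hb₀ : 0 < b := one_pos.trans_le hb
  have hexp : ∫⁻ u in Ioi (a * log b), ENNReal.ofReal (b * exp (-u / a)) = ENNReal.ofReal a := by
    simp_rw [ENNReal.ofReal_mul hb₀.le]
    rw [lintegral_const_mul' _ _ ofReal_ne_top, lintegral_Ioi_exp_neg_div ha,
      ← ENNReal.ofReal_mul hb₀.le, neg_div, mul_div_cancel_left₀ _ ha.ne', exp_neg, exp_log hb₀]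
    congr 1
    field_simp
  calc ∫⁻ ω, ENNReal.ofReal (f ω) ∂μ
      = ∫⁻ u in Ioc 0 (a * log b) ∪ Ioi (a * log b), μ {ω | u < f ω} := by
        rw [Ioc_union_Ioi_eq_Ioi hu₀, lintegral_eq_lintegral_meas_lt μ hf_nn hf]
    _ ≤ (∫⁻ _ in Ioc 0 (a * log b), 1) + ∫⁻ u in Ioi (a * log b), μ {ω | u < f ω} := by
        refine (lintegral_union_le _ _ _).trans ?_
        gcongr
        exact prob_le_one
    _ ≤ ENNReal.ofReal (a * log b) + ENNReal.ofReal a := by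
        rw [setLIntegral_one, volume_Ioc, sub_zero, ← hexp]
        exact add_le_add_right (setLIntegral_mono (by fun_prop) htail) _
    _ = ENNReal.ofReal (a * (1 + log b)) := by
        rw [← ENNReal.ofReal_add hu₀ ha.le]
        ring_nf

lemma integral_le_sqrt_of_lintegral_sq_le {Ω : Type*} {mΩ : MeasurableSpace Ω} {μ : Measure Ω}
    [IsProbabilityMeasure μ] {f : Ω → ℝ} (hf : Integrable f μ) {C : ℝ} (hC : 0 ≤ C)
    (hf2 : ∫⁻ ω, ENNReal.ofReal (f ω ^ 2) ∂μ ≤ ENNReal.ofReal C) :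
    ∫ ω, f ω ∂μ ≤ √C := by
  have hsq_nn : 0 ≤ᵐ[μ] fun ω => f ω ^ 2 := Eventually.of_forall fun ω => sq_nonneg (f ω)
  have hsq_int : Integrable (fun ω => f ω ^ 2) μ :=
    ⟨(hf.aestronglyMeasurable.pow 2),
      (hasFiniteIntegral_iff_ofReal hsq_nn).2 (hf2.trans_lt ofReal_lt_top)⟩
  have hjensen : (∫ ω, f ω ∂μ) ^ 2 ≤ ∫ ω, f ω ^ 2 ∂μ :=
    even_two.convexOn_pow.map_integral_le (continuous_pow 2).continuousOn isClosed_univ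
      (Eventually.of_forall fun _ => mem_univ _) hf hsq_int
  have hC2 : ∫ ω, f ω ^ 2 ∂μ ≤ C := by
    rw [integral_eq_lintegral_of_nonneg_ae hsq_nn hsq_int.aestronglyMeasurable]
    exact ENNReal.toReal_le_of_le_ofReal hC hf2
  exact (le_abs_self _).trans (abs_le_sqrt (hjensen.trans hC2))

lemma measure_lt_sq_max_sub_le {Ω : Type*} {mΩ : MeasurableSpace Ω} {μ : Measure Ω}
    {a b : ℝ} (ha : 0 < a) (hb : 1 ≤ b) {X Y : Ω → ℝ}
    (h : ∀ δ ∈ Ioo (0 : ℝ) 1, μ {ω | Y ω + √(a * log (b / δ)) ≤ X ω} ≤ ENNReal.ofReal δ)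
    {u : ℝ} (hu : a * log b < u) :
    μ {ω | u < max (X ω - Y ω) 0 ^ 2} ≤ ENNReal.ofReal (b * exp (-u / a)) := by
  have hb₀ : 0 < b := one_pos.trans_le hb
  have hu₀ : 0 < u := (mul_nonneg ha.le (log_nonneg hb)).trans_lt hu
  set δ := b * exp (-u / a)
  have hδ : δ ∈ Ioo (0 : ℝ) 1 := by
    refine ⟨by positivity, ?_⟩
    have hexponent : log b + -u / a < 0 := by
      rw [neg_div, ← sub_eq_add_neg, sub_neg, lt_div_iff₀ ha, mul_comm]
      exact hu
    simpa only [exp_add, exp_log hb₀] using exp_lt_one_iff.2 hexponent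
  have hlevel : a * log (b / δ) = u := by
    rw [log_div hb₀.ne' hδ.1.ne', log_mul hb₀.ne' (exp_pos _).ne', log_exp]
    field_simp
    ring
  refine (measure_mono fun ω hω => ?_).trans (h δ hδ)
  simp only [mem_ofPred_eq, hlevel] at hω ⊢
  have : √u < max (X ω - Y ω) 0 := by
    simpa [sqrt_sq (le_max_right _ _)] using sqrt_lt_sqrt hu₀.le hω
  rcases lt_max_iff.1 this with hXY | hneg
  · linarith
  · exact absurd hneg (sqrt_nonneg u).not_gt

end

theorem stmt10
    {Ω : Type*} {mΩ : MeasurableSpace Ω} (μ : Measure Ω) [IsProbabilityMeasure μ]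
    (a b : ℝ) (ha : 0 ≤ a) (hb : 1 ≤ b)
    (X Y : Ω → ℝ) (hX : Integrable X μ) (hY : Integrable Y μ)
    (h : ∀ δ ∈ Set.Ioo (0 : ℝ) 1,
      μ {ω | Y ω + Real.sqrt (a * Real.log (b / δ)) ≤ X ω} ≤ ENNReal.ofReal δ) :
    ∫ ω, X ω ∂μ ≤ (∫ ω, Y ω ∂μ) + Real.sqrt (a * (1 + Real.log b)) := by
  rcases ha.eq_or_lt with rfl | ha
  · have hXY : X ≤ᵐ[μ] Y := by
      refine ae_iff.2 (measure_mono_null (fun ω hω => ?_) (measure_eq_zero_of_forall_le_ofReal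
        (s := {ω | Y ω ≤ X ω}) (by simpa using h)))
      exact (not_le.1 hω).le
    simpa using integral_mono_ae hX hY hXY
  set W := fun ω => max (X ω - Y ω) 0
  have hW : Integrable W μ := (hX.sub hY).pos_part
  have hW2 : ∫⁻ ω, ENNReal.ofReal (W ω ^ 2) ∂μ ≤ ENNReal.ofReal (a * (1 + Real.log b)) :=
    lintegral_le_of_measure_lt_le_exp (Filter.Eventually.of_forall fun ω => sq_nonneg (W ω))
      (hW.aemeasurable.pow_const 2) ha hb fun u hu => measure_lt_sq_max_sub_le ha hb h hu
  calc ∫ ω, X ω ∂μ = (∫ ω, Y ω ∂μ) + ∫ ω, X ω - Y ω ∂μ := by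
        rw [integral_sub hX hY]; ring
    _ ≤ (∫ ω, Y ω ∂μ) + ∫ ω, W ω ∂μ :=
        add_le_add_right (integral_mono (hX.sub hY) hW fun ω => le_max_left _ _) _
    _ ≤ (∫ ω, Y ω ∂μ) + Real.sqrt (a * (1 + Real.log b)) :=
        add_le_add_right (integral_le_sqrt_of_lintegral_sq_le hW
          (mul_nonneg ha.le (by linarith [Real.log_nonneg hb])) hW2) _
end

section
/- Let b ≥ 1 and let Λ be a positive real random variable satisfying P(Λ ≤ δ) ≤ δ for all δ ∈ (0,1). Then E[ √( max(log(b/Λ), 0) ) ] ≤ √(1 + log b). -/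
/-!
Write `L = max (log (b / Λ)) 0`. By Cauchy–Schwarz, `E[√L] ≤ √(E[L])`, so it suffices to show
`E[L] ≤ 1 + log b`. By the layer-cake formula `E[L] = ∫_0^∞ P(L > t) dt`. For `t ≤ log b` bound the
tail by `1`; for `t > log b` the event `L > t` is contained in `Λ ≤ b e^{-t}` with `b e^{-t} < 1`,
so super-uniformity bounds it by `b e^{-t}`, whose integral over `(log b, ∞)` is `1`.
-/

open MeasureTheory Real Set ENNReal

section

variable {Ω : Type*} {mΩ : MeasurableSpace Ω} {μ : Measure Ω}

def IsSuperUniform (μ : Measure Ω) (Λ : Ω → ℝ) : Prop :=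
  ∀ δ ∈ Ioo (0 : ℝ) 1, μ {ω | Λ ω ≤ δ} ≤ ENNReal.ofReal δ

lemma ofReal_sqrt_sq (x : ℝ) : ENNReal.ofReal (√x) ^ (2 : ℝ) = ENNReal.ofReal x := by
  rw [ENNReal.ofReal_rpow_of_nonneg (sqrt_nonneg x) zero_le_two, Real.rpow_two, sq_sqrt',
    ENNReal.ofReal_max, ENNReal.ofReal_zero, max_zero]

lemma lintegral_le_rpow_lintegral_sq [IsProbabilityMeasure μ] {g : Ω → ℝ≥0∞}
    (hg : AEMeasurable g μ) : ∫⁻ ω, g ω ∂μ ≤ (∫⁻ ω, g ω ^ (2 : ℝ) ∂μ) ^ (1 / 2 : ℝ) := by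
  simpa using ENNReal.lintegral_mul_le_Lp_mul_Lq μ HolderConjugate.two_two hg aemeasurable_const
    (g := fun _ ↦ 1)

lemma lintegral_ofReal_sqrt_le [IsProbabilityMeasure μ] {f : Ω → ℝ} (hf : AEMeasurable f μ)
    {c : ℝ} (hfc : ∫⁻ ω, ENNReal.ofReal (f ω) ∂μ ≤ ENNReal.ofReal c) :
    ∫⁻ ω, ENNReal.ofReal (√(f ω)) ∂μ ≤ ENNReal.ofReal (√c) := by
  calc ∫⁻ ω, ENNReal.ofReal (√(f ω)) ∂μ
      ≤ (∫⁻ ω, ENNReal.ofReal (√(f ω)) ^ (2 : ℝ) ∂μ) ^ (1 / 2 : ℝ) :=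
        lintegral_le_rpow_lintegral_sq (ENNReal.measurable_ofReal.comp_aemeasurable
          (continuous_sqrt.measurable.comp_aemeasurable hf))
    _ ≤ ENNReal.ofReal c ^ (1 / 2 : ℝ) := by
        simp only [ofReal_sqrt_sq]
        gcongr
    _ = ENNReal.ofReal (√c) := by
        rw [← ofReal_sqrt_sq c, ← ENNReal.rpow_mul]
        norm_num

lemma lintegral_Ioi_ofReal_exp_neg (a : ℝ) :
    ∫⁻ t in Ioi a, ENNReal.ofReal (exp (-t)) = ENNReal.ofReal (exp (-a)) := by
  rw [← ofReal_integral_eq_lintegral_ofReal (exp_neg_integrableOn_Ioi a one_pos |>.congr_fun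
      (fun t _ ↦ by simp) measurableSet_Ioi) (.of_forall fun t ↦ (exp_pos _).le),
    integral_exp_neg_Ioi]

lemma IsSuperUniform.measure_lt_log_div_le {Λ : Ω → ℝ} (hΛ : IsSuperUniform μ Λ) {b t : ℝ}
    (hb : 0 < b) (ht : log b < t) :
    μ {ω | t < log (b / Λ ω)} ≤ ENNReal.ofReal (b * exp (-t)) := by
  have hδ_pos : 0 < b * exp (-t) := by positivity
  have hδ_lt_one : b * exp (-t) < 1 := by
    rw [← exp_log hb, ← exp_add, exp_lt_one_iff]
    linarith
  refine le_trans (measure_mono fun ω (hω : t < log (b / Λ ω)) ↦ ?_) (hΛ _ ⟨hδ_pos, hδ_lt_one⟩)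
  change Λ ω ≤ b * exp (-t)
  rcases le_or_gt (Λ ω) 0 with hΛω | hΛω
  · linarith
  · rw [lt_log_iff_exp_lt (div_pos hb hΛω), lt_div_iff₀ hΛω] at hω
    rw [exp_neg, ← div_eq_mul_inv, le_div_iff₀ (exp_pos t)]
    linarith

lemma IsSuperUniform.lintegral_max_log_div_le {Λ : Ω → ℝ} (hΛ : IsSuperUniform μ Λ)
    (hΛm : Measurable Λ) [IsProbabilityMeasure μ] {b : ℝ} (hb : 1 ≤ b) :
    ∫⁻ ω, ENNReal.ofReal (max (log (b / Λ ω)) 0) ∂μ ≤ ENNReal.ofReal (1 + log b) := by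
  have hb0 : 0 < b := one_pos.trans_le hb
  have hlogb : 0 ≤ log b := log_nonneg hb
  have superlevel_eq (t : ℝ) (ht : 0 < t) :
      {ω | t < max (log (b / Λ ω)) 0} = {ω | t < log (b / Λ ω)} := by
    ext ω
    simp [not_lt.mpr ht.le]
  rw [lintegral_eq_lintegral_meas_lt (f := fun ω ↦ max (log (b / Λ ω)) 0) μ
      (.of_forall fun _ ↦ le_max_right _ _) (by fun_prop),
    ← Ioc_union_Ioi_eq_Ioi hlogb, lintegral_union measurableSet_Ioi Ioc_disjoint_Ioi_same,
    ENNReal.ofReal_add zero_le_one hlogb, add_comm (ENNReal.ofReal 1)]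
  gcongr
  · calc ∫⁻ t in Ioc 0 (log b), μ {ω | t < max (log (b / Λ ω)) 0}
        ≤ ∫⁻ _ in Ioc 0 (log b), 1 := lintegral_mono fun _ ↦ prob_le_one
      _ = ENNReal.ofReal (log b) := by simp
  · calc ∫⁻ t in Ioi (log b), μ {ω | t < max (log (b / Λ ω)) 0}
        ≤ ∫⁻ t in Ioi (log b), ENNReal.ofReal b * ENNReal.ofReal (exp (-t)) := by
          refine setLIntegral_mono' measurableSet_Ioi fun t ht ↦ ?_
          rw [superlevel_eq t (hlogb.trans_lt ht), ← ENNReal.ofReal_mul hb0.le]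
          exact hΛ.measure_lt_log_div_le hb0 ht
      _ = ENNReal.ofReal 1 := by
          rw [lintegral_const_mul _ (by fun_prop), lintegral_Ioi_ofReal_exp_neg,
            ← ENNReal.ofReal_mul hb0.le, exp_neg, exp_log hb0, mul_inv_cancel₀ hb0.ne']

end

theorem stmt11_general
    {Ω : Type*} {mΩ : MeasurableSpace Ω} (μ : Measure Ω) [IsProbabilityMeasure μ]
    (b : ℝ) (hb : 1 ≤ b)
    (Λ : Ω → ℝ) (hΛmeas : Measurable Λ)
    (hsu : ∀ δ ∈ Set.Ioo (0 : ℝ) 1, μ {ω | Λ ω ≤ δ} ≤ ENNReal.ofReal δ) :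
    ∫⁻ ω, ENNReal.ofReal (Real.sqrt (max (Real.log (b / Λ ω)) 0)) ∂μ
      ≤ ENNReal.ofReal (Real.sqrt (1 + Real.log b)) :=
  lintegral_ofReal_sqrt_le (by fun_prop) (IsSuperUniform.lintegral_max_log_div_le hsu hΛmeas hb)

theorem stmt11
    {Ω : Type*} {mΩ : MeasurableSpace Ω} (μ : Measure Ω) [IsProbabilityMeasure μ]
    (b : ℝ) (hb : 1 ≤ b)
    (Λ : Ω → ℝ) (hΛmeas : Measurable Λ) (hΛpos : ∀ ω, 0 < Λ ω)
    (hsu : ∀ δ ∈ Set.Ioo (0 : ℝ) 1, μ {ω | Λ ω ≤ δ} ≤ ENNReal.ofReal δ) :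
    ∫⁻ ω, ENNReal.ofReal (Real.sqrt (max (Real.log (b / Λ ω)) 0)) ∂μ
      ≤ ENNReal.ofReal (Real.sqrt (1 + Real.log b)) :=
  stmt11_general (mΩ := mΩ) μ b hb Λ hΛmeas hsu
end

section
/- For every real number b ≥ 1: √(log b) + b·∫_{√(log b)}^∞ e^{−x²} dx ≤ √(1 + log b). -/
/-!
Let `G x = exp (-x²) * (√(x² + 1) - x)`. Using `√(x² + 1)² = x² + 1` one finds
`-G' x = exp (-x²) * (1 + x (√(x² + 1) - x)² / √(x² + 1)) ≥ exp (-x²)` for `x ≥ 0`, and `G → 0`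
at infinity, so `∫_y^∞ exp (-x²) dx ≤ G y` for `y ≥ 0`. At `y = √(log b)` the factor
`b * exp (-y²)` equals `1`.
-/

open Real MeasureTheory Set Filter Topology

noncomputable def gaussTailMajorant (x : ℝ) : ℝ := exp (-x ^ 2) * (√(x ^ 2 + 1) - x)

lemma sqrt_sq_add_one_sub_self_nonneg (x : ℝ) : 0 ≤ √(x ^ 2 + 1) - x := by
  have h : x ≤ √(x ^ 2 + 1) := Real.le_sqrt_of_sq_le (by linarith)
  linarith

lemma sqrt_sq_add_one_sub_self_le_one {x : ℝ} (hx : 0 ≤ x) : √(x ^ 2 + 1) - x ≤ 1 := by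
  have h : √(x ^ 2 + 1) ≤ x + 1 := Real.sqrt_le_iff.2 ⟨by linarith, by nlinarith⟩
  linarith

lemma hasDerivAt_gaussTailMajorant (x : ℝ) :
    HasDerivAt gaussTailMajorant
      (-(exp (-x ^ 2) * (1 + x * (√(x ^ 2 + 1) - x) ^ 2 / √(x ^ 2 + 1)))) x := by
  have hsq : √(x ^ 2 + 1) ^ 2 = x ^ 2 + 1 := Real.sq_sqrt (by positivity)
  have hsqrt : HasDerivAt (fun x : ℝ => √(x ^ 2 + 1)) (2 * x / (2 * √(x ^ 2 + 1))) x := by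
    simpa using ((hasDerivAt_pow 2 x).add_const 1).sqrt (by positivity)
  have hexp : HasDerivAt (fun x : ℝ => exp (-x ^ 2)) (exp (-x ^ 2) * -(2 * x)) x := by
    simpa using ((hasDerivAt_pow 2 x).neg).exp
  refine (hexp.mul (hsqrt.sub (hasDerivAt_id x))).congr_deriv ?_
  simp only [Pi.sub_apply, id]
  field_simp
  linear_combination (-x) * hsq

lemma tendsto_gaussTailMajorant_atTop : Tendsto gaussTailMajorant atTop (𝓝 0) := by
  have hexp : Tendsto (fun x : ℝ => exp (-x ^ 2)) atTop (𝓝 0) :=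
    tendsto_exp_neg_atTop_nhds_zero.comp (tendsto_pow_atTop two_ne_zero)
  refine tendsto_of_tendsto_of_tendsto_of_le_of_le' tendsto_const_nhds hexp ?_ ?_
  · exact Eventually.of_forall fun x =>
      mul_nonneg (exp_pos _).le (sqrt_sq_add_one_sub_self_nonneg x)
  · filter_upwards [eventually_ge_atTop 0] with x hx
    exact mul_le_of_le_one_right (exp_pos _).le (sqrt_sq_add_one_sub_self_le_one hx)

theorem integral_Ioi_exp_neg_sq_le {y : ℝ} (hy : 0 ≤ y) :
    ∫ x in Ioi y, exp (-x ^ 2) ≤ gaussTailMajorant y := by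
  set g' : ℝ → ℝ := fun x => exp (-x ^ 2) * (1 + x * (√(x ^ 2 + 1) - x) ^ 2 / √(x ^ 2 + 1))
  have hderiv : ∀ x ∈ Ici y, HasDerivAt (fun x => -gaussTailMajorant x) (g' x) x :=
    fun x _ => by
      have h := (hasDerivAt_gaussTailMajorant x).neg
      rwa [neg_neg] at h
  have hg'_ge : ∀ x ∈ Ioi y, exp (-x ^ 2) ≤ g' x := fun x hx => by
    have hx : 0 ≤ x := hy.trans (le_of_lt hx)
    exact le_mul_of_one_le_right (exp_pos _).le (le_add_of_nonneg_right (by positivity))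
  have hg'_nonneg : ∀ x ∈ Ioi y, 0 ≤ g' x := fun x hx => (exp_pos _).le.trans (hg'_ge x hx)
  have hlim : Tendsto (fun x => -gaussTailMajorant x) atTop (𝓝 0) := by
    have h := tendsto_gaussTailMajorant_atTop.neg
    rwa [neg_zero] at h
  calc ∫ x in Ioi y, exp (-x ^ 2)
      ≤ ∫ x in Ioi y, g' x := setIntegral_mono_of_nonneg (fun x _ => (exp_pos _).le) hg'_ge
          (integrableOn_Ioi_deriv_of_nonneg' hderiv hg'_nonneg hlim)
    _ = gaussTailMajorant y := by
          rw [integral_Ioi_of_hasDerivAt_of_nonneg' hderiv hg'_nonneg hlim, zero_sub, neg_neg]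

theorem stmt12 (b : ℝ) (hb : 1 ≤ b) :
    Real.sqrt (Real.log b)
      + b * ∫ x in Set.Ioi (Real.sqrt (Real.log b)), Real.exp (-(x ^ 2)) ≤
      Real.sqrt (1 + Real.log b) := by
  have hlog : 0 ≤ log b := log_nonneg hb
  have hsq : √(log b) ^ 2 = log b := sq_sqrt hlog
  have hb_exp : b * exp (-log b) = 1 := by
    rw [exp_neg, exp_log (by linarith)]
    exact mul_inv_cancel₀ (by linarith)
  have htail := mul_le_mul_of_nonneg_left (integral_Ioi_exp_neg_sq_le (sqrt_nonneg (log b)))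
    (by linarith : 0 ≤ b)
  rw [gaussTailMajorant, hsq, ← mul_assoc, hb_exp, one_mul, add_comm (log b)] at htail
  linarith
end
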